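/- arXiv:2507.12707 — 7 statements merged into one kernel-verified Lean document; each statement's English description precedes it below -/
import Mathlib

section
/- Given any tree T on kn vertices, there exists at most one set F of k-1 edges of T such that removing F from T creates k connected components, each with exactly n vertices. -/
/-!
If `e = uv` were cut by `F₁` but not by `F₂`, let `S` be the side of `u` in `T - e`, a union of
`F₁`-components, so `n ∣ |S|`. The `F₂`-component `C` of `u` contains `v`, hence straddles
`e`, while every other `F₂`-component misses `u` and so stays on one side of `e`. Thus
`n ∣ |S \ C|`, forcing `n ∣ |S ∩ C|` with `0 < |S ∩ C| < |C| = n`.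
-/

open SimpleGraph

namespace SimpleGraph

variable {V : Type*} {G : SimpleGraph V}

theorem subset_supp_or_disjoint_of_reachable {X : Set V}
    (hX : ∀ x ∈ X, ∀ y ∈ X, G.Reachable x y) (c : G.ConnectedComponent) :
    X ⊆ c.supp ∨ Disjoint X c.supp := by
  refine or_iff_not_imp_right.mpr fun hXc => ?_
  obtain ⟨x, hxX, hxc⟩ := Set.not_disjoint_iff.mp hXc
  intro y hyX
  rw [ConnectedComponent.mem_supp_iff] at hxc ⊢
  rw [← hxc]
  exact ConnectedComponent.sound (hX y hyX x hxX)

theorem ConnectedComponent.supp_subset_or_disjoint_of_le {H : SimpleGraph V} (hHG : H ≤ G)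
    (d : H.ConnectedComponent) (c : G.ConnectedComponent) :
    d.supp ⊆ c.supp ∨ Disjoint d.supp c.supp :=
  subset_supp_or_disjoint_of_reachable
    (fun _ hx _ hy => (d.reachable_of_mem_supp hx hy).mono hHG) c

theorem ConnectedComponent.reachable_deleteEdges_of_notMem_supp (d : G.ConnectedComponent)
    {u v x y : V} (hu : u ∉ d.supp) (hx : x ∈ d.supp) (hy : y ∈ d.supp) :
    (G.deleteEdges {s(u, v)}).Reachable x y := by
  classical
  obtain ⟨p⟩ := d.reachable_of_mem_supp hx hy
  refine reachable_deleteEdges_iff_exists_walk.mpr ⟨p, fun huv => hu ?_⟩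
  have hxu : G.Reachable x u := ⟨p.takeUntil u (p.fst_mem_support_of_mem_edges huv)⟩
  rw [ConnectedComponent.mem_supp_iff] at hx ⊢
  rw [← hx]
  exact ConnectedComponent.sound hxu.symm

theorem ConnectedComponent.supp_subset_or_disjoint_deleteEdges_of_notMem {H : SimpleGraph V}
    (hHG : H ≤ G) (d : H.ConnectedComponent) {u v : V} (hu : u ∉ d.supp)
    (c : (G.deleteEdges {s(u, v)}).ConnectedComponent) :
    d.supp ⊆ c.supp ∨ Disjoint d.supp c.supp :=
  subset_supp_or_disjoint_of_reachable (fun _ hx _ hy =>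
    (d.reachable_deleteEdges_of_notMem_supp hu hx hy).mono (deleteEdges_mono hHG)) c

theorem dvd_ncard_of_supp_subset_or_disjoint [Finite V] {n : ℕ}
    (hn : ∀ c : G.ConnectedComponent, c.supp.ncard = n) {S : Set V}
    (hS : ∀ c : G.ConnectedComponent, c.supp ⊆ S ∨ Disjoint c.supp S) : n ∣ S.ncard := by
  have : Fintype G.ConnectedComponent := Fintype.ofFinite _
  have hSunion : S = ⋃ c : G.ConnectedComponent, S ∩ c.supp := by
    rw [← Set.inter_iUnion, G.iUnion_connectedComponentSupp, Set.inter_univ]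
  rw [hSunion, Set.ncard_iUnion_of_finite (fun _ => Set.toFinite _)
    fun c d hcd => ((G.pairwise_disjoint_supp_connectedComponent hcd).inter_left' S).inter_right' S,
    finsum_eq_sum_of_fintype]
  refine Finset.dvd_sum fun c _ => ?_
  rcases hS c with h | h
  · rw [Set.inter_eq_right.mpr h, hn c]
  · rw [Set.inter_comm, h.inter_eq, Set.ncard_empty]
    exact dvd_zero n

theorem IsAcyclic.subset_of_forall_ncard_supp_eq [Finite V] (hG : G.IsAcyclic)
    {F₁ F₂ : Set (Sym2 V)} (hF₁ : F₁ ⊆ G.edgeSet) {n : ℕ}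
    (h₁ : ∀ c : (G.deleteEdges F₁).ConnectedComponent, c.supp.ncard = n)
    (h₂ : ∀ c : (G.deleteEdges F₂).ConnectedComponent, c.supp.ncard = n) : F₁ ⊆ F₂ := by
  intro e he
  induction e using Sym2.ind with | _ u v => ?_
  by_contra he₂
  set S := ((G.deleteEdges {s(u, v)}).connectedComponentMk u).supp
  set C := (G.deleteEdges F₂).connectedComponentMk u
  have hvS : v ∉ S := fun hv =>
    isBridge_iff.mp (isAcyclic_iff_forall_isBridge.mp hG (hF₁ he))
      (ConnectedComponent.exact hv).symm
  have hvC : v ∈ C.supp :=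
    C.mem_supp_of_adj_mem_supp rfl (deleteEdges_adj.mpr ⟨hF₁ he, he₂⟩)
  have hS : n ∣ S.ncard :=
    dvd_ncard_of_supp_subset_or_disjoint h₁ fun c =>
      c.supp_subset_or_disjoint_of_le (deleteEdges_anti (by simpa using he)) _
  have hSC : n ∣ (S \ C.supp).ncard := by
    refine dvd_ncard_of_supp_subset_or_disjoint h₂ fun d => ?_
    by_cases hdC : d = C
    · exact .inr (hdC ▸ Set.disjoint_sdiff_right)
    have hu : u ∉ d.supp := fun hu => hdC (ConnectedComponent.mem_supp_iff _ _ |>.mp hu).symm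
    have hdisj : Disjoint d.supp C.supp :=
      (G.deleteEdges F₂).pairwise_disjoint_supp_connectedComponent hdC
    rcases d.supp_subset_or_disjoint_deleteEdges_of_notMem (deleteEdges_le F₂) hu _ with h | h
    · exact .inl (Set.subset_sdiff.mpr ⟨h, hdisj⟩)
    · exact .inr (h.mono_right Set.sdiff_subset)
  have hpos : 0 < (S ∩ C.supp).ncard := (Set.ncard_pos (Set.toFinite _)).mpr ⟨u, rfl, rfl⟩
  have hlt : (S ∩ C.supp).ncard < n :=
    h₂ C ▸ Set.ncard_lt_ncard ⟨Set.inter_subset_right, fun h => hvS (h hvC).1⟩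
  have hdvd : n ∣ (S ∩ C.supp).ncard := by
    rw [← Set.ncard_inter_add_ncard_sdiff_eq_ncard S C.supp] at hS
    exact (Nat.dvd_add_left hSC).mp hS
  exact absurd (Nat.le_of_dvd hpos hdvd) hlt.not_ge

end SimpleGraph

theorem unique_splitting_set_general {V : Type*} [Fintype V] (n : ℕ)
    (T : SimpleGraph V) (hT : T.IsTree)
    (F₁ F₂ : Finset (Sym2 V))
    (hF₁e : ↑F₁ ⊆ T.edgeSet)
    (hF₁n : ∀ c : (T.deleteEdges ↑F₁).ConnectedComponent, c.supp.ncard = n)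
    (hF₂e : ↑F₂ ⊆ T.edgeSet)
    (hF₂n : ∀ c : (T.deleteEdges ↑F₂).ConnectedComponent, c.supp.ncard = n) :
    F₁ = F₂ :=
  Finset.coe_injective <|
    (hT.isAcyclic.subset_of_forall_ncard_supp_eq hF₁e hF₁n hF₂n).antisymm
      (hT.isAcyclic.subset_of_forall_ncard_supp_eq hF₂e hF₂n hF₁n)

/-- Given any tree `T` on `k*n` vertices, there is at most one set `F` of
`k-1` edges of `T` whose removal creates `k` connected components, each with exactly
`n` vertices. -/
theorem unique_splitting_set {V : Type*} [Fintype V] (k n : ℕ) (hk : 0 < k) (hn : 0 < n)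
    (T : SimpleGraph V) (hT : T.IsTree) (hV : Fintype.card V = k * n)
    (F₁ F₂ : Finset (Sym2 V))
    (hF₁e : ↑F₁ ⊆ T.edgeSet) (hF₁c : F₁.card = k - 1)
    (hF₁k : Nat.card (T.deleteEdges ↑F₁).ConnectedComponent = k)
    (hF₁n : ∀ c : (T.deleteEdges ↑F₁).ConnectedComponent, c.supp.ncard = n)
    (hF₂e : ↑F₂ ⊆ T.edgeSet) (hF₂c : F₂.card = k - 1)
    (hF₂k : Nat.card (T.deleteEdges ↑F₂).ConnectedComponent = k)
    (hF₂n : ∀ c : (T.deleteEdges ↑F₂).ConnectedComponent, c.supp.ncard = n) :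
    F₁ = F₂ :=
  unique_splitting_set_general n T hT F₁ F₂ hF₁e hF₁n hF₂e hF₂n
end

section
/- If a tree T on kn vertices can be split into k components each of size n by removing k-1 edges, then an edge e of T belongs to the unique splitting set F if and only if removing e alone from T leaves two components whose sizes are both multiples of n. -/
/-!
If `e ∈ F`, every component of `T - e` is a union of components of `T - F`, hence has size
divisible by `n`. Conversely, let `e = uv ∉ F`, let `C` be the component of `T - F` containing
`e` and `A` the component of `T - e` containing `u`; as `e` is a bridge, `v ∉ A`. The edges of
`T - F` leaving `C` survive in `T - e`, so `A \ C` is a union of components of `T - F`. Thus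
`n ∣ |A|` would force `n ∣ |A ∩ C|`, which is impossible since `0 < |A ∩ C| < |C| = n`.
-/
open SimpleGraph

section

variable {V : Type*}

lemma dvd_ncard_of_adj_closed [Finite V] {G : SimpleGraph V} {n : ℕ}
    (hG : ∀ c : G.ConnectedComponent, c.supp.ncard = n) {S : Set V}
    (hS : ∀ ⦃x y⦄, G.Adj x y → x ∈ S → y ∈ S) : n ∣ S.ncard := by
  classical
  have := Fintype.ofFinite V
  have hreach : ∀ ⦃x y⦄, G.Reachable x y → x ∈ S → y ∈ S := fun x y hxy hx => by
    rw [reachable_iff_reflTransGen] at hxy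
    induction hxy with
    | refl => exact hx
    | tail _ hab ih => exact hS hab ih
  rw [Set.ncard_eq_toFinset_card', Finset.card_eq_sum_card_image G.connectedComponentMk]
  refine Finset.dvd_sum fun c hc => ?_
  obtain ⟨x, hx, rfl⟩ := Finset.mem_image.mp hc
  have hfiber : {y ∈ S.toFinset | G.connectedComponentMk y = G.connectedComponentMk x} =
      (G.connectedComponentMk x).supp.toFinset := by
    ext y
    simp only [Finset.mem_filter, Set.mem_toFinset, ConnectedComponent.mem_supp_iff]
    exact and_iff_right_of_imp fun hy =>
      hreach (ConnectedComponent.exact hy).symm (Set.mem_toFinset.mp hx)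
  rw [hfiber, ← Set.ncard_eq_toFinset_card', hG]

lemma dvd_ncard_supp_of_le [Finite V] {G H : SimpleGraph V} {n : ℕ}
    (hG : ∀ c : G.ConnectedComponent, c.supp.ncard = n) (hGH : G ≤ H)
    (c : H.ConnectedComponent) : n ∣ c.supp.ncard :=
  dvd_ncard_of_adj_closed hG fun _ _ hxy hx => c.mem_supp_of_adj_mem_supp hx (hGH hxy)

lemma adj_deleteEdges_of_notMem_supp {G T : SimpleGraph V} (hGT : G ≤ T) {u v x y : V}
    (huv : G.Adj u v) (hx : x ∉ (G.connectedComponentMk u).supp) (hxy : G.Adj x y) :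
    (T.deleteEdges {s(u, v)}).Adj x y := by
  refine deleteEdges_adj.mpr ⟨hGT hxy, fun he => hx ?_⟩
  rcases Sym2.eq_iff.mp (Set.mem_singleton_iff.mp he) with ⟨rfl, -⟩ | ⟨rfl, -⟩
  · rfl
  · exact ((G.connectedComponentMk u).mem_supp_congr_adj huv).mp rfl

lemma exists_not_dvd_ncard_supp_deleteEdges [Finite V] {G T : SimpleGraph V} {n : ℕ}
    (hG : ∀ c : G.ConnectedComponent, c.supp.ncard = n) (hGT : G ≤ T) {u v : V}
    (huv : G.Adj u v) (hbridge : T.IsBridge s(u, v)) :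
    ∃ c : (T.deleteEdges {s(u, v)}).ConnectedComponent, ¬ n ∣ c.supp.ncard := by
  set c₀ := G.connectedComponentMk u
  set A := (T.deleteEdges {s(u, v)}).connectedComponentMk u
  refine ⟨A, fun hA => ?_⟩
  have hv : v ∈ c₀.supp := (c₀.mem_supp_congr_adj huv).mp rfl
  have hvA : v ∉ A.supp := fun h => isBridge_iff.mp hbridge (ConnectedComponent.exact h).symm
  have hdiff : n ∣ (A.supp \ c₀.supp).ncard := by
    refine dvd_ncard_of_adj_closed hG fun x y hxy ⟨hxA, hxc₀⟩ => ⟨?_, ?_⟩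
    · exact A.mem_supp_of_adj_mem_supp hxA (adj_deleteEdges_of_notMem_supp hGT huv hxc₀ hxy)
    · exact (c₀.mem_supp_congr_adj hxy).not.mp hxc₀
  have hinter : n ∣ (A.supp ∩ c₀.supp).ncard := by
    rw [← Nat.dvd_add_left hdiff, Set.ncard_inter_add_ncard_sdiff_eq_ncard]
    exact hA
  have hne : (A.supp ∩ c₀.supp).ncard ≠ 0 := Set.ncard_ne_zero_of_mem (a := u) ⟨rfl, rfl⟩
  have hlt : (A.supp ∩ c₀.supp).ncard < n :=
    hG c₀ ▸ Set.ncard_lt_ncard ⟨Set.inter_subset_right, fun h => hvA (h hv).1⟩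
  exact hne (Nat.eq_zero_of_dvd_of_lt hinter hlt)

end

theorem mem_splitting_set_iff_general {V : Type*} [Fintype V] (n : ℕ)
    (T : SimpleGraph V) (hT : T.IsTree)
    (F : Finset (Sym2 V))
    (hFn : ∀ c : (T.deleteEdges ↑F).ConnectedComponent, c.supp.ncard = n)
    (e : Sym2 V) (he : e ∈ T.edgeSet) :
    e ∈ F ↔ ∀ c : (T.deleteEdges {e}).ConnectedComponent, n ∣ c.supp.ncard := by
  induction e using Sym2.ind with
  | _ u v =>
  refine ⟨fun heF => dvd_ncard_supp_of_le hFn (deleteEdges_anti (by simpa using heF)),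
    fun hdvd => by_contra fun heF => ?_⟩
  have huv : (T.deleteEdges ↑F).Adj u v := deleteEdges_adj.mpr ⟨he, by simpa using heF⟩
  obtain ⟨c, hc⟩ := exists_not_dvd_ncard_supp_deleteEdges hFn (deleteEdges_le _) huv
    (isAcyclic_iff_forall_isBridge.mp hT.isAcyclic he)
  exact hc (hdvd c)

/-- If a tree `T` on `k*n` vertices is split into `k` components of size `n`
by removing the (unique) set `F` of `k-1` edges, then an edge `e` of `T` belongs to `F`
if and only if removing `e` alone from `T` leaves components whose sizes are all
multiples of `n` (i.e. the two pieces have sizes that are multiples of `n`). -/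
theorem mem_splitting_set_iff {V : Type*} [Fintype V] (k n : ℕ) (hk : 0 < k) (hn : 0 < n)
    (T : SimpleGraph V) (hT : T.IsTree) (hV : Fintype.card V = k * n)
    (F : Finset (Sym2 V))
    (hFe : ↑F ⊆ T.edgeSet) (hFc : F.card = k - 1)
    (hFk : Nat.card (T.deleteEdges ↑F).ConnectedComponent = k)
    (hFn : ∀ c : (T.deleteEdges ↑F).ConnectedComponent, c.supp.ncard = n)
    (e : Sym2 V) (he : e ∈ T.edgeSet) :
    e ∈ F ↔ ∀ c : (T.deleteEdges {e}).ConnectedComponent, n ∣ c.supp.ncard :=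
  mem_splitting_set_iff_general n T hT F hFn e he
end

section
/- For any connected graph G on N vertices (N = kn), the number of spanning forests of G with exactly k components each of size n is at most the number of k-splittable spanning trees of G, and the number of k-splittable spanning trees of G is at most N^{2(k-1)} times the number of such balanced spanning forests. -/
open SimpleGraph

/-- A spanning tree `T` (of a graph on `k*n` vertices) is `k`-splittable into pieces of
size `n` if some `k-1` of its edges can be removed so that every connected component of
the result has exactly `n` vertices. -/
def IsSplittable {V : Type*} [Fintype V] (T : SimpleGraph V) (k n : ℕ) : Prop :=
  ∃ F : Finset (Sym2 V), ↑F ⊆ T.edgeSet ∧ F.card = k - 1 ∧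
    ∀ c : (T.deleteEdges ↑F).ConnectedComponent, c.supp.ncard = n

/-- The number of `k`-splittable spanning trees of `G`. -/
noncomputable def numSplittableSpanningTrees {V : Type*} [Fintype V]
    (G : SimpleGraph V) (k n : ℕ) : ℕ :=
  Set.ncard {T : SimpleGraph V | T ≤ G ∧ T.IsTree ∧ IsSplittable T k n}

/-- The number of balanced spanning forests of `G`: spanning forests with exactly `k`
connected components, each of size `n`. -/
noncomputable def numBalancedSpanningForests {V : Type*} [Fintype V]
    (G : SimpleGraph V) (k n : ℕ) : ℕ :=
  Set.ncard {H : SimpleGraph V | H ≤ G ∧ H.IsAcyclic ∧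
    Nat.card H.ConnectedComponent = k ∧ ∀ c : H.ConnectedComponent, c.supp.ncard = n}

/-!
Deleting the `k - 1` splitting edges of a splittable tree `T` leaves a balanced forest `H`, and
`T` is recovered from `H` and the deleted edges; as there are at most `N ^ (2 * (k - 1))` sets
of `k - 1` edges, this gives the upper bound. Conversely a balanced forest extends to a spanning
tree, with `k - 1` new edges since every deleted bridge adds one component. The extension is
injective because an acyclic graph `T` has at most one spanning subgraph `H` whose components
all have `n` vertices: an edge `uv` of `T` lies in `H` iff `n` does not divide the size of the
component of `u` in `T - uv`.
-/

namespace SimpleGraph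

variable {V : Type*} {G H T : SimpleGraph V}

theorem Reachable.deleteEdges_singleton_or {a b x y : V} (h : G.Reachable x y) :
    (G.deleteEdges {s(a, b)}).Reachable x y ∨
      (G.deleteEdges {s(a, b)}).Reachable x a ∧ (G.deleteEdges {s(a, b)}).Reachable b y ∨
      (G.deleteEdges {s(a, b)}).Reachable x b ∧ (G.deleteEdges {s(a, b)}).Reachable a y := by
  obtain ⟨w⟩ := h
  induction w with
  | nil => exact .inl .rfl
  | @cons x z y hxz _ ih =>
    by_cases he : s(x, z) = s(a, b)
    · rcases Sym2.eq_iff.mp he with ⟨rfl, rfl⟩ | ⟨rfl, rfl⟩ <;>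
        rcases ih with h | ⟨h₁, h₂⟩ | ⟨h₁, h₂⟩ <;> tauto
    · have hxz' : (G.deleteEdges {s(a, b)}).Adj x z := by simp [hxz, he]
      rcases ih with h | ⟨h₁, h₂⟩ | ⟨h₁, h₂⟩
      · exact .inl (hxz'.reachable.trans h)
      · exact .inr (.inl ⟨hxz'.reachable.trans h₁, h₂⟩)
      · exact .inr (.inr ⟨hxz'.reachable.trans h₁, h₂⟩)

theorem card_connectedComponent_deleteEdges_of_isBridge [Finite V] {a b : V} (hab : G.Adj a b)
    (hbr : G.IsBridge s(a, b)) :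
    Nat.card (G.deleteEdges {s(a, b)}).ConnectedComponent = Nat.card G.ConnectedComponent + 1 := by
  have hH : ¬(G.deleteEdges {s(a, b)}).Reachable a b := isBridge_iff.mp hbr
  set φ := ConnectedComponent.map (Hom.ofLE (deleteEdges_le {s(a, b)} : G.deleteEdges _ ≤ G))
  set s := Set.univ \ {(G.deleteEdges {s(a, b)}).connectedComponentMk b}
  have hinj : s.InjOn φ := by
    intro c hc d hd hcd
    induction c using ConnectedComponent.ind with | h x => ?_
    induction d using ConnectedComponent.ind with | h y => ?_
    simp only [s, Set.mem_sdiff, Set.mem_singleton_iff, ConnectedComponent.eq, Set.mem_univ,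
      true_and] at hc hd
    simp only [φ, ConnectedComponent.map_mk, Hom.ofLE_apply, ConnectedComponent.eq] at hcd
    rw [ConnectedComponent.eq]
    rcases hcd.deleteEdges_singleton_or (a := a) (b := b) with h | ⟨-, h⟩ | ⟨h, -⟩
    · exact h
    · exact absurd h.symm hd
    · exact absurd h hc
  have himage : φ '' s = Set.univ := by
    refine Set.eq_univ_of_forall fun c => ?_
    induction c using ConnectedComponent.ind with | h x => ?_
    by_cases hx : (G.deleteEdges {s(a, b)}).Reachable x b
    · refine ⟨(G.deleteEdges {s(a, b)}).connectedComponentMk a, ?_, ?_⟩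
      · simpa [s, ConnectedComponent.eq] using hH
      · simp only [φ, ConnectedComponent.map_mk, Hom.ofLE_apply, ConnectedComponent.eq]
        exact hab.reachable.trans (hx.symm.mono (deleteEdges_le _))
    · exact ⟨(G.deleteEdges {s(a, b)}).connectedComponentMk x,
        by simpa [s, ConnectedComponent.eq] using hx, rfl⟩
  calc Nat.card (G.deleteEdges {s(a, b)}).ConnectedComponent
      = s.ncard + 1 := by
        rw [Set.ncard_sdiff_singleton_add_one (Set.mem_univ _), Set.ncard_univ]
    _ = Nat.card G.ConnectedComponent + 1 := by
        rw [← hinj.ncard_image, himage, Set.ncard_univ]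

theorem IsAcyclic.card_connectedComponent_deleteEdges [Finite V] (hT : T.IsAcyclic)
    {F : Finset (Sym2 V)} (hF : ↑F ⊆ T.edgeSet) :
    Nat.card (T.deleteEdges ↑F).ConnectedComponent = Nat.card T.ConnectedComponent + F.card := by
  classical
  induction F using Finset.induction_on with
  | empty => simp
  | @insert e F he ih =>
    rw [Finset.coe_insert, Set.insert_subset_iff] at hF
    have heF : e ∈ (T.deleteEdges ↑F).edgeSet := by simp [hF.1, he]
    induction e using Sym2.ind with | h a b => ?_
    have hbr := isAcyclic_iff_forall_isBridge.mp (hT.anti (deleteEdges_le _)) heF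
    rw [Finset.coe_insert, Set.insert_eq, Set.union_comm, ← deleteEdges_deleteEdges,
      card_connectedComponent_deleteEdges_of_isBridge heF hbr, ih hF.2,
      Finset.card_insert_of_notMem he, add_assoc]

theorem dvd_ncard_of_forall_reachable_mem [Finite V] {n : ℕ}
    (hH : ∀ c : H.ConnectedComponent, c.supp.ncard = n) {S : Set V}
    (hS : ∀ x ∈ S, ∀ y, H.Reachable x y → y ∈ S) : n ∣ S.ncard := by
  classical
  have := Fintype.ofFinite V
  have hfiber : ∀ c ∈ S.toFinset.image H.connectedComponentMk,
      {x ∈ S.toFinset | H.connectedComponentMk x = c} = c.supp.toFinset := by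
    simp only [Finset.mem_image, Set.mem_toFinset]
    rintro _ ⟨x, hx, rfl⟩
    ext y
    simp only [Finset.mem_filter, Set.mem_toFinset, ConnectedComponent.mem_supp_iff,
      ConnectedComponent.eq, and_iff_right_iff_imp]
    exact fun hyx => hS x hx y hyx.symm
  rw [Set.ncard_eq_toFinset_card', Finset.card_eq_sum_card_image H.connectedComponentMk]
  refine Finset.dvd_sum fun c hc => ?_
  rw [hfiber c hc, ← Set.ncard_eq_toFinset_card', hH]

theorem Reachable.deleteEdges_singleton_of_not_reachable {x y u v : V} (h : H.Reachable x y)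
    (hxu : ¬H.Reachable x u) : (H.deleteEdges {s(u, v)}).Reachable x y := by
  classical
  by_contra hxy
  obtain ⟨w⟩ := h
  exact hxu ⟨w.takeUntil u (w.fst_mem_support_of_mem_edges
    (w.mem_edges_of_not_reachable_deleteEdges hxy))⟩

theorem IsAcyclic.adj_iff_not_dvd [Finite V] {n : ℕ} (hT : T.IsAcyclic) (hHT : H ≤ T)
    (hH : ∀ c : H.ConnectedComponent, c.supp.ncard = n) {u v : V} (huv : T.Adj u v) :
    H.Adj u v ↔ ¬n ∣ ((T.deleteEdges {s(u, v)}).connectedComponentMk u).supp.ncard := by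
  set A := ((T.deleteEdges {s(u, v)}).connectedComponentMk u).supp
  have hA : ∀ {x}, x ∈ A ↔ (T.deleteEdges {s(u, v)}).Reachable u x := by
    intro x
    rw [ConnectedComponent.mem_supp_iff, ConnectedComponent.eq, reachable_comm]
  constructor
  · intro hHuv hdvd
    set C := (H.connectedComponentMk u).supp
    have hC : ∀ {x}, x ∈ C ↔ H.Reachable u x := by
      intro x
      rw [ConnectedComponent.mem_supp_iff, ConnectedComponent.eq, reachable_comm]
    have hcomp : n ∣ (A \ C).ncard := by
      refine dvd_ncard_of_forall_reachable_mem hH fun x ⟨hxA, hxC⟩ y hxy => ⟨?_, ?_⟩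
      · have hxu : ¬H.Reachable x u := fun h => hxC (hC.mpr h.symm)
        exact hA.mpr (hA.mp hxA |>.trans <|
          (hxy.deleteEdges_singleton_of_not_reachable hxu).mono (deleteEdges_mono hHT))
      · exact fun hy => hxC (hC.mpr (hC.mp hy |>.trans hxy.symm))
    have hinter : n ∣ (A ∩ C).ncard := by
      rwa [← Nat.dvd_add_left hcomp, Set.ncard_inter_add_ncard_sdiff_eq_ncard]
    have hpos : 0 < (A ∩ C).ncard :=
      (Set.ncard_pos (Set.toFinite _)).mpr ⟨u, hA.mpr .rfl, hC.mpr .rfl⟩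
    have hlt : (A ∩ C).ncard < n := by
      rw [← hH (H.connectedComponentMk u)]
      refine Set.ncard_lt_ncard ⟨Set.inter_subset_right, fun hCA => ?_⟩
      have hbr := isAcyclic_iff_forall_adj_isBridge.mp hT huv
      exact isBridge_iff.mp hbr (hA.mp (hCA (hC.mpr hHuv.reachable)).1)
    exact hlt.not_ge (Nat.le_of_dvd hpos hinter)
  · intro hndvd
    by_contra hHuv
    refine hndvd (dvd_ncard_of_forall_reachable_mem hH fun x hx y hxy => ?_)
    have hle : H ≤ T.deleteEdges {s(u, v)} :=
      (deleteEdges_eq_self.mpr (Set.disjoint_singleton_right.mpr hHuv)).ge.trans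
        (deleteEdges_mono hHT)
    exact hA.mpr ((hA.mp hx).trans (hxy.mono hle))

theorem IsAcyclic.eq_of_le_of_forall_ncard_supp_eq [Finite V] {n : ℕ} (hT : T.IsAcyclic)
    {H₁ H₂ : SimpleGraph V} (h₁ : H₁ ≤ T) (h₂ : H₂ ≤ T)
    (hc₁ : ∀ c : H₁.ConnectedComponent, c.supp.ncard = n)
    (hc₂ : ∀ c : H₂.ConnectedComponent, c.supp.ncard = n) : H₁ = H₂ := by
  ext u v
  by_cases huv : T.Adj u v
  · rw [hT.adj_iff_not_dvd h₁ hc₁ huv, hT.adj_iff_not_dvd h₂ hc₂ huv]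
  · exact iff_of_false (fun h => huv (h₁ h)) (fun h => huv (h₂ h))

theorem Connected.card_connectedComponent (hG : G.Connected) :
    Nat.card G.ConnectedComponent = 1 :=
  have := hG.preconnected.subsingleton_connectedComponent
  have := hG.nonempty.map G.connectedComponentMk
  Nat.card_unique

theorem IsTree.isSplittable_of_le [Fintype V] {k n : ℕ} (hT : T.IsTree) (hHT : H ≤ T)
    (hk : Nat.card H.ConnectedComponent = k) (hn : ∀ c : H.ConnectedComponent, c.supp.ncard = n) :
    IsSplittable T k n := by
  classical
  refine ⟨(T.edgeSet \ H.edgeSet).toFinset, by simp, ?_, ?_⟩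
  · have := hT.isAcyclic.card_connectedComponent_deleteEdges
      (F := (T.edgeSet \ H.edgeSet).toFinset) (by simp)
    rw [Set.coe_toFinset, deleteEdges_sdiff_eq_of_le hHT, hT.connected.card_connectedComponent]
      at this
    omega
  · rwa [Set.coe_toFinset, deleteEdges_sdiff_eq_of_le hHT]

end SimpleGraph

theorem Finset.ncard_setOf_card_eq_le (α : Type*) [Fintype α] (m : ℕ) :
    {s : Finset α | s.card = m}.ncard ≤ Fintype.card α ^ m := by
  classical
  calc {s : Finset α | s.card = m}.ncard
      = (Finset.univ.powersetCard m : Finset (Finset α)).card := by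
        rw [← Set.ncard_coe_finset]
        congr
        ext
        simp
    _ ≤ Fintype.card α ^ m := by
        rw [Finset.card_powersetCard, Finset.card_univ]
        exact Nat.choose_le_pow _ _

section Counting

variable {V : Type*} [Fintype V] {G : SimpleGraph V}

theorem numBalancedSpanningForests_le_numSplittableSpanningTrees (hG : G.Connected)
    (k n : ℕ) :
    numBalancedSpanningForests G k n ≤ numSplittableSpanningTrees G k n := by
  have hext : ∀ H : SimpleGraph V, H ≤ G ∧ H.IsAcyclic ∧
      Nat.card H.ConnectedComponent = k ∧ (∀ c : H.ConnectedComponent, c.supp.ncard = n) →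
      ∃ T, H ≤ T ∧ T ≤ G ∧ T.IsTree ∧ IsSplittable T k n := by
    rintro H ⟨hHG, hH, hk, hn⟩
    obtain ⟨T, hHT, hTG, hT⟩ := hG.exists_isTree_le_of_le_of_isAcyclic hHG hH
    exact ⟨T, hHT, hTG, hT, hT.isSplittable_of_le hHT hk hn⟩
  choose! tree hle htree using hext
  refine Set.ncard_le_ncard_of_injOn tree htree (fun H₁ h₁ H₂ h₂ heq => ?_)
  exact (htree H₁ h₁).2.1.isAcyclic.eq_of_le_of_forall_ncard_supp_eq (hle H₁ h₁)
    (heq ▸ hle H₂ h₂) h₁.2.2.2 h₂.2.2.2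

theorem numSplittableSpanningTrees_le {k : ℕ} (hk : 0 < k) (n : ℕ) :
    numSplittableSpanningTrees G k n ≤
      Fintype.card V ^ (2 * (k - 1)) * numBalancedSpanningForests G k n := by
  set B := {H : SimpleGraph V | H ≤ G ∧ H.IsAcyclic ∧
    Nat.card H.ConnectedComponent = k ∧ ∀ c : H.ConnectedComponent, c.supp.ncard = n}
  set P := {F : Finset (Sym2 V) | F.card = k - 1}
  have hcover : {T : SimpleGraph V | T ≤ G ∧ T.IsTree ∧ IsSplittable T k n} ⊆
      (fun p : SimpleGraph V × Finset (Sym2 V) => fromEdgeSet (p.1.edgeSet ∪ p.2)) ''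
        (B ×ˢ P) := by
    rintro T ⟨hTG, hT, F, hF, hFk, hn⟩
    refine ⟨(T.deleteEdges F, F), ⟨⟨(deleteEdges_le _).trans hTG,
      hT.isAcyclic.anti (deleteEdges_le _), ?_, hn⟩, hFk⟩, ?_⟩
    · rw [hT.isAcyclic.card_connectedComponent_deleteEdges hF,
        hT.connected.card_connectedComponent, hFk]
      omega
    · simp only [edgeSet_deleteEdges, Set.sdiff_union_of_subset hF, fromEdgeSet_edgeSet]
  have hP : P.ncard ≤ Fintype.card V ^ (2 * (k - 1)) := calc
    P.ncard ≤ Fintype.card (Sym2 V) ^ (k - 1) := Finset.ncard_setOf_card_eq_le _ _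
    _ ≤ (Fintype.card V ^ 2) ^ (k - 1) := by
      gcongr
      rw [sq, ← Fintype.card_prod]
      exact Fintype.card_le_of_surjective _ Sym2.mk_surjective
    _ = Fintype.card V ^ (2 * (k - 1)) := by rw [← pow_mul]
  calc numSplittableSpanningTrees G k n
      ≤ (B ×ˢ P).ncard :=
        (Set.ncard_le_ncard hcover (Set.toFinite _)).trans (Set.ncard_image_le (Set.toFinite _))
    _ = numBalancedSpanningForests G k n * P.ncard := Set.ncard_prod
    _ ≤ Fintype.card V ^ (2 * (k - 1)) * numBalancedSpanningForests G k n := by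
      rw [mul_comm]
      gcongr

end Counting

theorem balanced_forests_vs_splittable_trees_general {V : Type*} [Fintype V] (G : SimpleGraph V)
    (hG : G.Connected) (k n : ℕ) (hk : 0 < k) :
    numBalancedSpanningForests G k n ≤ numSplittableSpanningTrees G k n ∧
    numSplittableSpanningTrees G k n ≤
      Fintype.card V ^ (2 * (k - 1)) * numBalancedSpanningForests G k n :=
  ⟨numBalancedSpanningForests_le_numSplittableSpanningTrees hG k n,
    numSplittableSpanningTrees_le hk n⟩

/-- For a connected graph `G` on `N = k*n` vertices, the number of balanced
spanning forests of `G` is at most the number of `k`-splittable spanning trees of `G`,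
which in turn is at most `N^(2(k-1))` times the number of balanced spanning forests. -/
theorem balanced_forests_vs_splittable_trees {V : Type*} [Fintype V] (G : SimpleGraph V)
    (hG : G.Connected) (k n : ℕ) (hk : 0 < k) (hn : 0 < n)
    (hV : Fintype.card V = k * n) :
    numBalancedSpanningForests G k n ≤ numSplittableSpanningTrees G k n ∧
    numSplittableSpanningTrees G k n ≤
      Fintype.card V ^ (2 * (k - 1)) * numBalancedSpanningForests G k n :=
  balanced_forests_vs_splittable_trees_general G hG k n hk
end

section
/- Let m = pN where 0 < p ≤ 1/2 and m is a positive integer with m ≤ N. For a binomial random variable X ~ Bin(N, m/N) and any integer j with 0 ≤ j ≤ m, we have P[X = m+j] ≥ (1/2)·P[X = m-j]. -/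
set_option maxHeartbeats 1000000

lemma key_ratio (m A : ℕ) (hm : 0 < m) (hA : m ≤ A) :
    ∀ j, j ≤ m →
      ((m + A).choose (m - j) : ℝ) * (A : ℝ) ^ (2 * j) * ((m : ℝ) * ((A : ℝ) + j)) ≤
      ((m + A).choose (m + j) : ℝ) * (m : ℝ) ^ (2 * j) * ((A : ℝ) * ((m : ℝ) + j)) := by
  intro j
  induction j with
  | zero => intro _; simp; ring_nf; rfl
  | succ j IH =>
    intro hj1
    have hjm : j ≤ m := by omega
    have IH' := IH hjm
    -- nat identities
    have h1n : (m + A).choose (m + j + 1) * (m + j + 1) = (m + A).choose (m + j) * (A - j) := by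
      have := Nat.choose_succ_right_eq (m + A) (m + j)
      have e : m + A - (m + j) = A - j := by omega
      rw [e] at this; exact this
    have h2n : (m + A).choose (m - j) * (m - j) = (m + A).choose (m - (j + 1)) * (A + j + 1) := by
      have := Nat.choose_succ_right_eq (m + A) (m - (j + 1))
      have e1 : m - (j + 1) + 1 = m - j := by omega
      have e2 : m + A - (m - (j + 1)) = A + j + 1 := by omega
      rw [e1, e2] at this; exact this
    set c1 : ℝ := ((m + A).choose (m + j) : ℝ) with hc1
    set c2 : ℝ := ((m + A).choose (m - j) : ℝ) with hc2
    set c1' : ℝ := ((m + A).choose (m + j + 1) : ℝ) with hc1'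
    set c2' : ℝ := ((m + A).choose (m - (j + 1)) : ℝ) with hc2'
    set M : ℝ := (m : ℝ) with hM
    set Ar : ℝ := (A : ℝ) with hAr
    have hjA : j ≤ A := le_trans hjm hA
    have r1 : c1' * (M + j + 1) = c1 * (Ar - j) := by
      have := congrArg (fun n : ℕ => (n : ℝ)) h1n
      push_cast [Nat.cast_sub hjA] at this
      linarith [this]
    have r2 : c2 * (M - j) = c2' * (Ar + j + 1) := by
      have := congrArg (fun n : ℕ => (n : ℝ)) h2n
      push_cast [Nat.cast_sub hjm] at this
      linarith [this]
    set x : ℝ := Ar ^ (2 * j) with hx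
    set y : ℝ := M ^ (2 * j) with hy
    have hxnn : 0 ≤ x := by positivity
    have hynn : 0 ≤ y := by positivity
    have hM0 : 0 < M := by rw [hM]; exact_mod_cast hm
    have hMA : M ≤ Ar := by rw [hM, hAr]; exact_mod_cast hA
    have hA0 : 0 < Ar := lt_of_lt_of_le hM0 hMA
    have hjr : (j : ℝ) + 1 ≤ M := by rw [hM]; exact_mod_cast hj1
    have hj0 : (0:ℝ) ≤ j := by positivity
    have hc1nn : (0:ℝ) ≤ c1 := by positivity
    -- core inequality: c2*(M-j)*x*Ar^2*M ≤ c1*(Ar-j)*y*M^2*Ar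
    have core : c2 * (M - j) * x * Ar ^ 2 * M ≤ c1 * (Ar - j) * y * M ^ 2 * Ar := by
      have step2 : c2 * x * (M * (Ar + j)) * ((M - j) * Ar ^ 2) ≤
          c1 * y * (Ar * (M + j)) * ((M - j) * Ar ^ 2) := by
        apply mul_le_mul_of_nonneg_right IH'
        have : (0:ℝ) ≤ M - j := by linarith
        positivity
      have step3 : c1 * y * (Ar * ((M + j) * ((M - j) * Ar ^ 2))) ≤
          c1 * y * (Ar * ((Ar - j) * ((Ar + j) * M ^ 2))) := by
        apply mul_le_mul_of_nonneg_left _ (by positivity)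
        apply mul_le_mul_of_nonneg_left _ (le_of_lt hA0)
        have h2 : M ^ 2 ≤ Ar ^ 2 := by nlinarith
        nlinarith [mul_nonneg (sq_nonneg (j:ℝ)) (sub_nonneg.mpr h2)]
      have comb : c2 * (M - j) * x * Ar ^ 2 * M * (Ar + j) ≤
          c1 * (Ar - j) * y * M ^ 2 * Ar * (Ar + j) := by
        calc c2 * (M - j) * x * Ar ^ 2 * M * (Ar + j)
            = c2 * x * (M * (Ar + j)) * ((M - j) * Ar ^ 2) := by ring
          _ ≤ c1 * y * (Ar * (M + j)) * ((M - j) * Ar ^ 2) := step2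
          _ = c1 * y * (Ar * ((M + j) * ((M - j) * Ar ^ 2))) := by ring
          _ ≤ c1 * y * (Ar * ((Ar - j) * ((Ar + j) * M ^ 2))) := step3
          _ = c1 * (Ar - j) * y * M ^ 2 * Ar * (Ar + j) := by ring
      exact le_of_mul_le_mul_right comb (by linarith)
    -- assemble the goal
    have goal2 : c2' * (x * Ar ^ 2) * (M * (Ar + j + 1)) * ((M + j + 1) * (Ar + j + 1)) ≤
        c1' * (y * M ^ 2) * (Ar * (M + j + 1)) * ((M + j + 1) * (Ar + j + 1)) := by
      have lhs_eq : c2' * (x * Ar ^ 2) * (M * (Ar + j + 1)) * ((M + j + 1) * (Ar + j + 1)) =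
          (c2 * (M - j) * x * Ar ^ 2 * M) * ((M + j + 1) * (Ar + j + 1)) := by
        linear_combination (-((M + j + 1) * (Ar + j + 1) * x * Ar ^ 2 * M)) * r2
      have rhs_eq : c1' * (y * M ^ 2) * (Ar * (M + j + 1)) * ((M + j + 1) * (Ar + j + 1)) =
          (c1 * (Ar - j) * y * M ^ 2 * Ar) * ((M + j + 1) * (Ar + j + 1)) := by
        linear_combination ((M + j + 1) * (Ar + j + 1) * y * M ^ 2 * Ar) * r1
      rw [lhs_eq, rhs_eq]
      exact mul_le_mul_of_nonneg_right core (by positivity)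
    have key : c2' * (x * Ar ^ 2) * (M * (Ar + j + 1)) ≤
        c1' * (y * M ^ 2) * (Ar * (M + j + 1)) :=
      le_of_mul_le_mul_right goal2 (by positivity)
    have ex : 2 * (j + 1) = 2 * j + 2 := by ring
    calc ((m + A).choose (m - (j + 1)) : ℝ) * (A : ℝ) ^ (2 * (j + 1)) *
          ((m : ℝ) * ((A : ℝ) + (j + 1 : ℕ)))
        = c2' * (x * Ar ^ 2) * (M * (Ar + j + 1)) := by
          rw [ex, pow_add]; push_cast; ring
      _ ≤ c1' * (y * M ^ 2) * (Ar * (M + j + 1)) := key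
      _ = ((m + A).choose (m + (j + 1)) : ℝ) * (m : ℝ) ^ (2 * (j + 1)) *
          ((A : ℝ) * ((m : ℝ) + (j + 1 : ℕ))) := by
          rw [ex, pow_add, show m + (j + 1) = m + j + 1 from rfl]; push_cast; ring

/-- Let `m = pN` with `0 < p ≤ 1/2` and `m` a positive integer, `m ≤ N`.
For a binomial random variable `X ~ Bin(N, m/N)` and any integer `0 ≤ j ≤ m`,
`P[X = m+j] ≥ (1/2)·P[X = m-j]`, where `P[X = t] = C(N,t)·(m/N)^t·(1-m/N)^(N-t)`. -/
theorem binomial_upper_tail_pointwise (N m j : ℕ) (p : ℝ)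
    (hp0 : 0 < p) (hp : p ≤ 1 / 2) (hm : (m : ℝ) = p * N) (hm0 : 0 < m)
    (hmN : m ≤ N) (hj : j ≤ m) :
    (N.choose (m + j) : ℝ) * ((m : ℝ) / N) ^ (m + j) *
        (1 - (m : ℝ) / N) ^ (N - (m + j)) ≥
      (1 / 2) * ((N.choose (m - j) : ℝ) * ((m : ℝ) / N) ^ (m - j) *
        (1 - (m : ℝ) / N) ^ (N - (m - j))) := by
  have hN0 : 0 < N := lt_of_lt_of_le hm0 hmN
  have hNr : (0:ℝ) < N := by exact_mod_cast hN0
  have hpval : p = (m:ℝ) / N := by field_simp [ne_of_gt hNr] at hm ⊢; linarith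
  -- 2 * m ≤ N
  have h2m : 2 * m ≤ N := by
    have : (m:ℝ) / N ≤ 1 / 2 := hpval ▸ hp
    have h2 : (2:ℝ) * m ≤ N := by
      rw [div_le_div_iff₀ hNr (by norm_num : (0:ℝ) < 2)] at this; linarith
    exact_mod_cast h2
  set A : ℕ := N - m with hAdef
  have hNA : N = m + A := by omega
  have hmA : m ≤ A := by omega
  have hjA : j ≤ A := le_trans hj hmA
  have key := key_ratio m A hm0 hmA j hj
  rw [← hNA] at key
  set a : ℝ := (m:ℝ) / N with ha
  have ha0 : 0 < a := by positivity
  have h1a : 1 - a = (A:ℝ) / N := by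
    rw [ha, hAdef]
    rw [Nat.cast_sub hmN]
    field_simp
  have h1a0 : 0 < 1 - a := by
    rw [h1a]
    have : 0 < A := by omega
    exact div_pos (by exact_mod_cast this) hNr
  -- exponents
  have e1 : N - (m + j) = A - j := by omega
  have e2 : N - (m - j) = A + j := by omega
  rw [e1, e2]
  have pw1 : a ^ (m + j) = a ^ (m - j) * a ^ (2 * j) := by
    rw [show m + j = (m - j) + 2 * j by omega, pow_add]
  have pw2 : (1 - a) ^ (A + j) = (1 - a) ^ (A - j) * (1 - a) ^ (2 * j) := by
    rw [show A + j = (A - j) + 2 * j by omega, pow_add]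
  rw [pw1, pw2]
  set c1 : ℝ := (N.choose (m + j) : ℝ) with hc1
  set c2 : ℝ := (N.choose (m - j) : ℝ) with hc2
  set u : ℝ := a ^ (m - j) with hu
  set v : ℝ := (1 - a) ^ (A - j) with hv
  have hu0 : 0 < u := pow_pos ha0 _
  have hv0 : 0 < v := pow_pos h1a0 _
  have Mr : (0:ℝ) < (m:ℝ) := by exact_mod_cast hm0
  have Ar0 : (0:ℝ) < (A:ℝ) := lt_of_lt_of_le Mr (by exact_mod_cast hmA)
  have hS : ((A:ℝ) * ((m:ℝ) + j)) ≤ 2 * ((m:ℝ) * ((A:ℝ) + j)) := by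
    have hjm : (j:ℝ) ≤ (m:ℝ) := by exact_mod_cast hj
    have hmAr : (m:ℝ) ≤ (A:ℝ) := by exact_mod_cast hmA
    nlinarith [mul_le_mul_of_nonneg_left hjm (le_of_lt Ar0)]
  have hmain : c2 * (A:ℝ) ^ (2 * j) ≤ 2 * (c1 * (m:ℝ) ^ (2 * j)) := by
    have hc1nn : (0:ℝ) ≤ c1 := by positivity
    have chain : c2 * (A:ℝ) ^ (2 * j) * ((m:ℝ) * ((A:ℝ) + j)) ≤
        2 * (c1 * (m:ℝ) ^ (2 * j)) * ((m:ℝ) * ((A:ℝ) + j)) := by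
      calc c2 * (A:ℝ) ^ (2 * j) * ((m:ℝ) * ((A:ℝ) + j))
          ≤ c1 * (m:ℝ) ^ (2 * j) * ((A:ℝ) * ((m:ℝ) + j)) := key
        _ ≤ c1 * (m:ℝ) ^ (2 * j) * (2 * ((m:ℝ) * ((A:ℝ) + j))) := by
            apply mul_le_mul_of_nonneg_left hS (by positivity)
        _ = 2 * (c1 * (m:ℝ) ^ (2 * j)) * ((m:ℝ) * ((A:ℝ) + j)) := by ring
    exact le_of_mul_le_mul_right chain (by positivity)
  have hap : a ^ (2 * j) = (m:ℝ) ^ (2 * j) / (N:ℝ) ^ (2 * j) := by rw [ha, div_pow]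
  have h1ap : (1 - a) ^ (2 * j) = (A:ℝ) ^ (2 * j) / (N:ℝ) ^ (2 * j) := by rw [h1a, div_pow]
  have D0 : (0:ℝ) < (N:ℝ) ^ (2 * j) := by positivity
  have K : (1/2) * (c2 * (1 - a) ^ (2 * j)) ≤ c1 * a ^ (2 * j) := by
    rw [hap, h1ap]
    calc (1/2) * (c2 * ((A:ℝ) ^ (2 * j) / (N:ℝ) ^ (2 * j)))
        = ((1/2) * (c2 * (A:ℝ) ^ (2 * j))) / (N:ℝ) ^ (2 * j) := by ring
      _ ≤ (c1 * (m:ℝ) ^ (2 * j)) / (N:ℝ) ^ (2 * j) := by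
          apply (div_le_div_iff_of_pos_right D0).mpr
          linarith [hmain]
      _ = c1 * ((m:ℝ) ^ (2 * j) / (N:ℝ) ^ (2 * j)) := by ring
  have final := mul_le_mul_of_nonneg_right K (le_of_lt (mul_pos hu0 hv0))
  calc (1/2) * (c2 * u * (v * (1 - a) ^ (2 * j)))
      = (1/2) * (c2 * (1 - a) ^ (2 * j)) * (u * v) := by ring
    _ ≤ c1 * a ^ (2 * j) * (u * v) := final
    _ = c1 * (u * a ^ (2 * j)) * v := by ring
end

section
/- Let L' be a ladder graph obtained from a ladder L by appending one vertex v adjacent to exactly two vertices of L (one endpoint of each of the two rails, which are themselves adjacent in L). Then 2·τ(L) ≤ τ(L') ≤ 3·τ(L), where τ denotes the number of spanning trees. -/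
open SimpleGraph

/-- The triangular-lattice ladder on `n` vertices: listing the vertices of the two
parallel rails in zigzag order `0, 1, …, n-1`, two vertices are adjacent exactly when
they are at distance 1 or 2 in this order (vertices at distance 2 are consecutive on
the same rail, vertices at distance 1 are on opposite rails). -/
def ladder (n : ℕ) : SimpleGraph (Fin n) :=
  SimpleGraph.fromRel (fun i j => (j : ℕ) = (i : ℕ) + 1 ∨ (j : ℕ) = (i : ℕ) + 2)

/-- The number of spanning trees of `G`. -/
noncomputable def numSpanningTrees {V : Type*} [Fintype V] (G : SimpleGraph V) : ℕ :=
  Set.ncard {T : SimpleGraph V | T ≤ G ∧ T.IsTree}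

/-!
Let `v` be the appended vertex and `a`, `b` its two neighbours. For each of them, deleting `v`
from the spanning trees of `L'` in which `v` is a leaf hanging at that neighbour, and conversely
attaching `v` as such a leaf, is a bijection with the spanning trees of `L`; the two classes are
disjoint, which gives the lower bound. Every other spanning tree of `L'` contains both edges
`va` and `vb`, and contracting them into the edge `ab` (which such a tree cannot contain) is
injective into the spanning trees of `L`, which gives the upper bound.
-/

namespace SimpleGraph

section

variable {V W : Type*}

theorem Connected.of_forall_adj_reachable {G : SimpleGraph V} {H : SimpleGraph W}
    (hG : G.Connected) (φ : V → W) (hφ : Function.Surjective φ)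
    (h : ∀ ⦃x y⦄, G.Adj x y → H.Reachable (φ x) (φ y)) : H.Connected := by
  have hreach : ∀ x y, G.Reachable x y → H.Reachable (φ x) (φ y) := fun x y hxy => by
    rw [reachable_iff_reflTransGen] at hxy ⊢
    exact hxy.lift' φ fun a b hab => (reachable_iff_reflTransGen _ _).1 (h hab)
  refine (connected_iff H).2 ⟨fun w₁ w₂ => ?_, hG.nonempty.map φ⟩
  obtain ⟨x, rfl⟩ := hφ w₁
  obtain ⟨y, rfl⟩ := hφ w₂
  exact hreach x y (hG.preconnected x y)

theorem IsAcyclic.map (f : V ↪ W) {G : SimpleGraph V} (hG : G.IsAcyclic) :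
    (G.map f).IsAcyclic := by
  intro w c hc
  have hsupp : ∀ x ∈ c.support, x ∈ Set.range f := fun x hx => by
    obtain ⟨e, he, hxe⟩ := (Walk.mem_support_iff_exists_mem_edges_of_not_nil hc.not_nil).1 hx
    induction e using Sym2.ind with
    | h a b =>
      obtain ⟨a', b', -, rfl, rfl⟩ := (map_adj f G a b).1 (c.adj_of_mem_edges he)
      rcases Sym2.mem_iff.1 hxe with rfl | rfl <;> exact Set.mem_range_self _
  -- `c` stays inside the range of `f`, on which `Set.rangeSplitting f` is an injective
  -- homomorphism back to `G`
  let ψ : (G.map f).induce (Set.range f) →g G :=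
    ⟨Set.rangeSplitting f, fun {x y} hxy => by
      obtain ⟨a, b, hab, hx, hy⟩ := (map_adj f G _ _).1 (induce_adj.1 hxy)
      rwa [← f.injective (hx.trans (Set.apply_rangeSplitting f x).symm),
        ← f.injective (hy.trans (Set.apply_rangeSplitting f y).symm)]⟩
  have hcycle : (c.induce _ hsupp).IsCycle := by
    rw [← Walk.isCycle_map_iff_of_injective (f := (Embedding.induce (G := G.map f) _).toHom)
      Subtype.val_injective, Walk.map_induce]
    exact hc
  exact hG.comap ψ (Set.rangeSplitting_injective f) _ hcycle

end

section

variable {n : ℕ}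

def addLeaf (S : SimpleGraph (Fin n)) (u : Fin n) : SimpleGraph (Fin (n + 1)) :=
  S.map Fin.castSuccEmb ⊔ edge (Fin.last n) u.castSucc

lemma comap_castSuccEmb_addLeaf (S : SimpleGraph (Fin n)) (u : Fin n) :
    (S.addLeaf u).comap Fin.castSuccEmb = S := by
  ext i j
  simpa [addLeaf, edge_adj, map_adj', Fin.castSucc_ne_last] using @Adj.ne _ S i j

lemma neighborSet_addLeaf_last (S : SimpleGraph (Fin n)) (u : Fin n) :
    (S.addLeaf u).neighborSet (Fin.last n) = {u.castSucc} := by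
  ext w
  induction w using Fin.lastCases <;>
    simp [addLeaf, edge_adj, map_adj', Fin.castSucc_ne_last, eq_comm]

lemma addLeaf_le {S : SimpleGraph (Fin n)} {G' : SimpleGraph (Fin (n + 1))} {u : Fin n}
    (hS : S ≤ G'.comap Fin.castSuccEmb) (hu : G'.Adj (Fin.last n) u.castSucc) :
    S.addLeaf u ≤ G' :=
  sup_le ((map_le_iff_le_comap _ _ _).2 hS) ((edge_le_iff G').2 (Or.inr hu))

lemma IsTree.addLeaf {S : SimpleGraph (Fin n)} (hS : S.IsTree) (u : Fin n) :
    (S.addLeaf u).IsTree := by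
  refine ⟨(connected_iff_exists_forall_reachable _).2 ⟨u.castSucc, fun x => ?_⟩, ?_⟩
  · induction x using Fin.lastCases with
    | last => exact Adj.reachable (by simp [SimpleGraph.addLeaf, edge_adj, Fin.castSucc_ne_last])
    | cast i =>
      exact ((hS.connected.preconnected u i).map (Embedding.map Fin.castSuccEmb S).toHom).mono
        le_sup_left
  · refine (hS.isAcyclic.map Fin.castSuccEmb).sup_edge_of_not_reachable
      (not_reachable_of_neighborSet_left_eq_empty (Fin.castSucc_ne_last u).symm ?_)
    ext w
    simp [map_adj', Fin.castSucc_ne_last]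

variable {T T' : SimpleGraph (Fin (n + 1))}

lemma ext_of_comap_castSuccEmb_eq (hc : T.comap Fin.castSuccEmb = T'.comap Fin.castSuccEmb)
    (hN : T.neighborSet (Fin.last n) = T'.neighborSet (Fin.last n)) : T = T' := by
  ext x y
  induction x using Fin.lastCases with
  | last => simpa only [mem_neighborSet] using Set.ext_iff.1 hN y
  | cast i =>
    induction y using Fin.lastCases with
    | last => simpa only [mem_neighborSet, adj_comm _ i.castSucc] using Set.ext_iff.1 hN i.castSucc
    | cast j => exact Iff.of_eq (congrArg (·.Adj i j) hc)

lemma Connected.of_comap_castSuccEmb_le {S : SimpleGraph (Fin n)} (hT : T.Connected)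
    (hS : T.comap Fin.castSuccEmb ≤ S) (u : Fin n)
    (hu : ∀ i, T.Adj (Fin.last n) i.castSucc → S.Reachable u i) : S.Connected := by
  refine hT.of_forall_adj_reachable (Fin.lastCases u id) (fun i => ⟨i.castSucc, by simp⟩) ?_
  intro x y hxy
  induction x using Fin.lastCases with
  | last =>
    induction y using Fin.lastCases with
    | last => exact absurd rfl hxy.ne
    | cast j => simpa using hu j hxy
  | cast i =>
    induction y using Fin.lastCases with
    | last => simpa using (hu i hxy.symm).symm
    | cast j => simpa using (hS hxy).reachable

lemma IsTree.comap_castSuccEmb (hT : T.IsTree) {u : Fin n}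
    (hN : T.neighborSet (Fin.last n) = {u.castSucc}) : (T.comap Fin.castSuccEmb).IsTree := by
  refine ⟨hT.connected.of_comap_castSuccEmb_le le_rfl u fun i hi => ?_, hT.isAcyclic.of_comap _⟩
  obtain rfl : i = u := by simpa [← mem_neighborSet, hN] using hi
  rfl

lemma IsAcyclic.not_reachable_comap_castSuccEmb (hT : T.IsAcyclic) {a b : Fin n} (hab : a ≠ b)
    (ha : T.Adj (Fin.last n) a.castSucc) (hb : T.Adj (Fin.last n) b.castSucc) :
    ¬(T.comap Fin.castSuccEmb).Reachable a b := by
  intro hr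
  obtain ⟨p, hp⟩ := hr.exists_isPath
  let ι : T.comap Fin.castSuccEmb →g T := ⟨Fin.castSucc, id⟩
  let q := p.map ι
  have hlast : Fin.last n ∉ q.support := by
    simp only [q, Walk.support_map, List.mem_map, not_exists, not_and]
    exact fun x _ => Fin.castSucc_ne_last x
  -- prefixing the edge from the last vertex to `a` keeps `q` a path, whose second vertex must
  -- then be the neighbour `b` of its start
  have hq : (Walk.cons ha q).IsPath := (hp.map (f := ι) (Fin.castSucc_injective n)).cons hlast
  have hba := hT.eq_snd_of_adj_start hq hb (Walk.end_mem_support _)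
  rw [Walk.snd_cons, Fin.castSucc_inj] at hba
  exact hab hba.symm

lemma IsTree.comap_castSuccEmb_sup_edge (hT : T.IsTree) {a b : Fin n} (hab : a ≠ b)
    (hN : T.neighborSet (Fin.last n) = {a.castSucc, b.castSucc}) :
    (T.comap Fin.castSuccEmb ⊔ edge a b).IsTree := by
  have ha : T.Adj (Fin.last n) a.castSucc := by simp [← mem_neighborSet, hN]
  have hb : T.Adj (Fin.last n) b.castSucc := by simp [← mem_neighborSet, hN]
  refine ⟨hT.connected.of_comap_castSuccEmb_le le_sup_left a fun i hi => ?_,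
    (hT.isAcyclic.of_comap _).sup_edge_of_not_reachable
      (hT.isAcyclic.not_reachable_comap_castSuccEmb hab ha hb)⟩
  obtain rfl | rfl : i = a ∨ i = b := by simpa [← mem_neighborSet, hN] using hi
  · rfl
  · exact Adj.reachable (Or.inr ((edge_adj _ _ _ _).2 ⟨Or.inl ⟨rfl, rfl⟩, hab⟩))

end

section

variable {n : ℕ} {G : SimpleGraph (Fin n)} {G' : SimpleGraph (Fin (n + 1))}

def spanningTreesWithLastNeighbors (G' : SimpleGraph (Fin (n + 1))) (N : Set (Fin (n + 1))) :
    Set (SimpleGraph (Fin (n + 1))) :=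
  {T | T ≤ G' ∧ T.IsTree ∧ T.neighborSet (Fin.last n) = N}

lemma ncard_spanningTreesWithLastNeighbors_singleton_le (hG : G'.comap Fin.castSuccEmb ≤ G)
    (u : Fin n) :
    (G'.spanningTreesWithLastNeighbors {u.castSucc}).ncard ≤ numSpanningTrees G := by
  refine Set.ncard_le_ncard_of_injOn (·.comap Fin.castSuccEmb) ?_ ?_ (Set.toFinite _)
  · rintro T ⟨hle, hT, hN⟩
    exact ⟨(comap_monotone _ hle).trans hG, hT.comap_castSuccEmb hN⟩
  · rintro T ⟨-, -, hN⟩ T' ⟨-, -, hN'⟩ hc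
    exact ext_of_comap_castSuccEmb_eq hc (hN.trans hN'.symm)

lemma numSpanningTrees_le_ncard_spanningTreesWithLastNeighbors_singleton
    (hG : G ≤ G'.comap Fin.castSuccEmb) {u : Fin n} (hu : G'.Adj (Fin.last n) u.castSucc) :
    numSpanningTrees G ≤ (G'.spanningTreesWithLastNeighbors {u.castSucc}).ncard := by
  refine Set.ncard_le_ncard_of_injOn (·.addLeaf u) ?_ ?_ (Set.toFinite _)
  · rintro S ⟨hle, hS⟩
    exact ⟨addLeaf_le (hle.trans hG) hu, hS.addLeaf u, neighborSet_addLeaf_last S u⟩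
  · intro S _ S' _ h
    have hc := congrArg (·.comap Fin.castSuccEmb) h
    rwa [comap_castSuccEmb_addLeaf, comap_castSuccEmb_addLeaf] at hc

lemma ncard_spanningTreesWithLastNeighbors_pair_le (hG : G'.comap Fin.castSuccEmb ≤ G)
    {a b : Fin n} (hab : G.Adj a b) :
    (G'.spanningTreesWithLastNeighbors {a.castSucc, b.castSucc}).ncard ≤ numSpanningTrees G := by
  refine Set.ncard_le_ncard_of_injOn (·.comap Fin.castSuccEmb ⊔ edge a b) ?_ ?_ (Set.toFinite _)
  · rintro T ⟨hle, hT, hN⟩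
    exact ⟨sup_le ((comap_monotone _ hle).trans hG) ((edge_le_iff G).2 (Or.inr hab)),
      hT.comap_castSuccEmb_sup_edge hab.ne hN⟩
  · intro T hT T' hT' h
    -- `ab` is not an edge of `T.comap Fin.castSuccEmb`, so deleting it undoes the contraction
    have hdel : ∀ T ∈ G'.spanningTreesWithLastNeighbors {a.castSucc, b.castSucc},
        (T.comap Fin.castSuccEmb ⊔ edge a b) \ edge a b = T.comap Fin.castSuccEmb := by
      rintro T ⟨-, hT, hN⟩
      rw [sup_sdiff_right_self, sdiff_edge]
      refine fun hadj => hT.isAcyclic.not_reachable_comap_castSuccEmb hab.ne ?_ ?_ hadj.reachable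
      all_goals simp [← mem_neighborSet, hN]
    refine ext_of_comap_castSuccEmb_eq ?_ (hT.2.2.trans hT'.2.2.symm)
    rw [← hdel T hT, ← hdel T' hT']
    exact congrArg (· \ edge a b) h

theorem two_mul_numSpanningTrees_le {a b : Fin n} (hG : G ≤ G'.comap Fin.castSuccEmb)
    (hN : {a.castSucc, b.castSucc} ⊆ G'.neighborSet (Fin.last n)) (hab : a ≠ b) :
    2 * numSpanningTrees G ≤ numSpanningTrees G' := by
  have hdisj : Disjoint (G'.spanningTreesWithLastNeighbors {a.castSucc})
      (G'.spanningTreesWithLastNeighbors {b.castSucc}) := by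
    refine Set.disjoint_left.2 fun T ⟨_, _, hNa⟩ ⟨_, _, hNb⟩ => hab ?_
    simpa using hNa.symm.trans hNb
  calc 2 * numSpanningTrees G = numSpanningTrees G + numSpanningTrees G := two_mul _
    _ ≤ (G'.spanningTreesWithLastNeighbors {a.castSucc}).ncard
        + (G'.spanningTreesWithLastNeighbors {b.castSucc}).ncard :=
      add_le_add
        (numSpanningTrees_le_ncard_spanningTreesWithLastNeighbors_singleton hG (hN (by simp)))
        (numSpanningTrees_le_ncard_spanningTreesWithLastNeighbors_singleton hG (hN (by simp)))
    _ = (G'.spanningTreesWithLastNeighbors {a.castSucc}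
        ∪ G'.spanningTreesWithLastNeighbors {b.castSucc}).ncard :=
      (Set.ncard_union_eq hdisj).symm
    _ ≤ numSpanningTrees G' :=
      Set.ncard_le_ncard (Set.union_subset (fun T ⟨hle, hT, _⟩ => ⟨hle, hT⟩)
        (fun T ⟨hle, hT, _⟩ => ⟨hle, hT⟩)) (Set.toFinite _)

theorem numSpanningTrees_le_three_mul {a b : Fin n} (hG : G'.comap Fin.castSuccEmb ≤ G)
    (hN : G'.neighborSet (Fin.last n) ⊆ {a.castSucc, b.castSucc}) (hab : G.Adj a b) :
    numSpanningTrees G' ≤ 3 * numSpanningTrees G := by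
  let A := G'.spanningTreesWithLastNeighbors {a.castSucc}
  let B := G'.spanningTreesWithLastNeighbors {b.castSucc}
  let C := G'.spanningTreesWithLastNeighbors {a.castSucc, b.castSucc}
  have hcover : {T | T ≤ G' ∧ T.IsTree} ⊆ A ∪ B ∪ C := by
    rintro T ⟨hle, hT⟩
    have hne : (T.neighborSet (Fin.last n)).Nonempty :=
      (hT.connected.preconnected _ _).nonempty_neighborSet_left (Fin.castSucc_ne_last a).symm
    rcases Set.subset_pair_iff_eq.1 ((neighborSet_mono hle _).trans hN) with h | h | h | h
    · exact absurd h hne.ne_empty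
    · exact Or.inl (Or.inl ⟨hle, hT, h⟩)
    · exact Or.inl (Or.inr ⟨hle, hT, h⟩)
    · exact Or.inr ⟨hle, hT, h⟩
  calc numSpanningTrees G' ≤ (A ∪ B ∪ C).ncard := Set.ncard_le_ncard hcover (Set.toFinite _)
    _ ≤ A.ncard + B.ncard + C.ncard :=
      (Set.ncard_union_le _ _).trans (Nat.add_le_add_right (Set.ncard_union_le _ _) _)
    _ ≤ numSpanningTrees G + numSpanningTrees G + numSpanningTrees G :=
      add_le_add (add_le_add (ncard_spanningTreesWithLastNeighbors_singleton_le hG a)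
        (ncard_spanningTreesWithLastNeighbors_singleton_le hG b))
        (ncard_spanningTreesWithLastNeighbors_pair_le hG hab)
    _ = 3 * numSpanningTrees G := by ring

end

end SimpleGraph

lemma ladder_adj_iff {n : ℕ} {i j : Fin n} :
    (ladder n).Adj i j ↔
      (j : ℕ) = i + 1 ∨ (j : ℕ) = i + 2 ∨ (i : ℕ) = j + 1 ∨ (i : ℕ) = j + 2 := by
  simp only [ladder, fromRel_adj, ne_eq, Fin.ext_iff]
  omega

lemma comap_castSuccEmb_ladder (n : ℕ) : (ladder (n + 1)).comap Fin.castSuccEmb = ladder n := by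
  ext i j
  simp [ladder_adj_iff]

lemma neighborSet_ladder_last {n : ℕ} (hn : 2 ≤ n) :
    (ladder (n + 1)).neighborSet (Fin.last n) =
      {(⟨n - 1, by omega⟩ : Fin n).castSucc, (⟨n - 2, by omega⟩ : Fin n).castSucc} := by
  ext w
  simp only [mem_neighborSet, ladder_adj_iff, Fin.val_last, Set.mem_insert_iff,
    Set.mem_singleton_iff, Fin.ext_iff, Fin.val_castSucc]
  omega

/-- If the ladder `L'` on `n+1` vertices is obtained from the ladder `L`
on `n ≥ 2` vertices by appending one vertex adjacent to exactly two (mutually adjacent)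
vertices of `L`, then `2·τ(L) ≤ τ(L') ≤ 3·τ(L)`. -/
theorem ladder_extension_spanning_trees (n : ℕ) (hn : 2 ≤ n) :
    2 * numSpanningTrees (ladder n) ≤ numSpanningTrees (ladder (n + 1)) ∧
    numSpanningTrees (ladder (n + 1)) ≤ 3 * numSpanningTrees (ladder n) := by
  have hab : (ladder n).Adj ⟨n - 1, by omega⟩ ⟨n - 2, by omega⟩ := by
    simp only [ladder_adj_iff]
    omega
  exact ⟨two_mul_numSpanningTrees_le (comap_castSuccEmb_ladder n).ge
      (neighborSet_ladder_last hn).superset hab.ne,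
    numSpanningTrees_le_three_mul (comap_castSuccEmb_ladder n).le
      (neighborSet_ladder_last hn).subset hab⟩
end

section
/- The cycle graph C_{3n} has exactly n partitions of its vertex set into 3 connected pieces of size n each (up to labeling of the pieces), and for any two such partitions P, P', there is no pair of pieces of P whose union equals the union of some pair of pieces of P' unless P = P'. Consequently, the ReCom move (merging two adjacent pieces and resplitting the merged region into two connected pieces of size n) cannot transform any balanced 3-partition of C_{3n} into a different balanced 3-partition. -/
open SimpleGraph Finset

/-- A balanced 3-partition of the cycle `C_{3n}`: a partition of the vertex set into 3
parts, each of size `n` and each inducing a connected subgraph of the cycle. -/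
def IsBalanced3Partition (n : ℕ)
    (P : Finpartition (Finset.univ : Finset (Fin (3 * n)))) : Prop :=
  P.parts.card = 3 ∧ ∀ s ∈ P.parts, s.card = n ∧
    ((SimpleGraph.cycleGraph (3 * n)).induce (↑s : Set (Fin (3 * n)))).Connected

/-!
A connected set of `k < m` vertices of the cycle `C_m` is an arc: take a vertex `a` of it whose
predecessor is missing; a walk inside the set never crosses `a - 1`, so with every vertex `x` the
set contains the whole stretch from `a` to `x`. If the arc `[c, c + n)` is a part of a partition
of `C_m` into connected parts of size `n`, the part containing `c + n` is an arc that cannot start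
before `c + n` without meeting `[c, c + n)`, so it is `[c + n, c + 2n)`. Hence a balanced partition
of `C_{qn}` is determined by any one of its parts `[c, c + n)`: it consists of the blocks
`[c + in, c + (i + 1)n)`, and these partitions for `0 ≤ c < n` are pairwise distinct. Two parts of
a 3-partition determine the third one as the complement of their union.
-/

open Fin.NatCast Fin.CommRing

lemma SimpleGraph.Preconnected.subset_of_adj_closed {V : Type*} {G : SimpleGraph V} {s T : Set V}
    (hs : (G.induce s).Preconnected) {a : V} (ha : a ∈ s) (haT : a ∈ T)
    (hT : ∀ x ∈ s, ∀ y ∈ s, G.Adj x y → x ∈ T → y ∈ T) : s ⊆ T := by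
  suffices ∀ u v : s, (G.induce s).Walk u v → ↑u ∈ T → ↑v ∈ T from
    fun y hy => this ⟨a, ha⟩ ⟨y, hy⟩ (hs _ _).some haT
  intro u v w
  induction w with
  | nil => exact id
  | cons h _ ih => exact fun hu => ih (hT _ (Subtype.prop _) _ (Subtype.prop _) h hu)

lemma Fin.val_add_one_of_ne_zero {m : ℕ} [NeZero m] {v : Fin m} (h : v + 1 ≠ 0) :
    (v + 1).val = v.val + 1 := by
  have h1 := Fin.val_sub_one_of_ne_zero h
  have h2 := mt Fin.val_eq_zero_iff.1 h
  rw [add_sub_cancel_right] at h1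
  rw [h1, Nat.sub_add_cancel (Nat.one_le_iff_ne_zero.2 h2)]

section Arc
variable {m : ℕ} [NeZero m]

def cycleArc (a : Fin m) (k : ℕ) : Finset (Fin m) :=
  (range k).image fun i : ℕ => a + (i : Fin m)

variable {a b x y : Fin m} {k : ℕ}

lemma mem_cycleArc : x ∈ cycleArc a k ↔ ∃ i < k, a + (i : Fin m) = x := by
  simp [cycleArc]

lemma mem_cycleArc_iff_val_sub_lt (hk : k ≤ m) : x ∈ cycleArc a k ↔ (x - a).val < k := by
  refine mem_cycleArc.trans ⟨?_, fun h => ⟨_, h, by simp⟩⟩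
  rintro ⟨i, hi, rfl⟩
  simpa [Fin.val_cast_of_lt (hi.trans_le hk)] using hi

lemma self_mem_cycleArc (hk : 0 < k) : a ∈ cycleArc a k :=
  mem_cycleArc.2 ⟨0, hk, by simp⟩

lemma cycleArc_add_one : cycleArc a (k + 1) = insert (a + (k : Fin m)) (cycleArc a k) := by
  rw [cycleArc, range_add_one, image_insert, cycleArc]

lemma card_cycleArc (hk : k ≤ m) : #(cycleArc a k) = k := by
  rw [cycleArc, card_image_of_injOn, card_range]
  intro i hi j hj hij
  have := congrArg Fin.val (add_left_cancel hij)
  simp only [coe_range, Set.mem_Iio] at hi hj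
  rwa [Fin.val_cast_of_lt (hi.trans_le hk), Fin.val_cast_of_lt (hj.trans_le hk)] at this

lemma sub_one_mem_cycleArc (hk : k ≤ m) (hx : x ∈ cycleArc a k) (hxa : x ≠ a) :
    x - 1 ∈ cycleArc a k := by
  rw [mem_cycleArc_iff_val_sub_lt hk] at hx ⊢
  rw [sub_right_comm, Fin.val_sub_one_of_ne_zero (sub_ne_zero.2 hxa)]
  omega

lemma cycleArc_injective (hk : 0 < k) (h2k : 2 * k ≤ m) :
    Function.Injective (cycleArc (m := m) · k) := by
  intro a b (hab : cycleArc a k = cycleArc b k)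
  have ha : a ∈ cycleArc b k := hab ▸ self_mem_cycleArc hk
  have hb : b ∈ cycleArc a k := hab ▸ self_mem_cycleArc hk
  obtain ⟨i, hi, rfl⟩ := mem_cycleArc.1 ha
  obtain ⟨j, hj, hji⟩ := mem_cycleArc.1 hb
  have h0 : ((i + j : ℕ) : Fin m) = 0 := by
    push_cast
    simpa [add_assoc] using hji
  rw [Fin.ext_iff, Fin.val_cast_of_lt (by omega), Fin.val_zero] at h0
  simp [show i = 0 by omega]

lemma disjoint_cycleArc_add {i j : ℕ} (hij : i + k ≤ j) (hjm : j + k ≤ m) (a : Fin m) :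
    Disjoint (cycleArc (a + (i : Fin m)) k) (cycleArc (a + (j : Fin m)) k) := by
  rw [Finset.disjoint_left]
  rintro x hx hx'
  obtain ⟨p, hp, rfl⟩ := mem_cycleArc.1 hx
  obtain ⟨q, hq, hpq⟩ := mem_cycleArc.1 hx'
  have h : ((j + q : ℕ) : Fin m) = ((i + p : ℕ) : Fin m) := by
    push_cast
    simpa [add_assoc] using hpq
  rw [Fin.ext_iff, Fin.val_cast_of_lt (by omega), Fin.val_cast_of_lt (by omega)] at h
  omega

lemma SimpleGraph.cycleGraph_adj_iff (hm : 1 < m) :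
    (cycleGraph m).Adj x y ↔ y = x + 1 ∨ y = x - 1 := by
  have hone : ∀ v : Fin m, v.val = 1 ↔ v = 1 := fun v => by
    rw [Fin.ext_iff, Fin.val_one', Nat.mod_eq_of_lt hm]
  rw [cycleGraph_adj', hone, hone, sub_eq_iff_eq_add', sub_eq_iff_eq_add', eq_sub_iff_add_eq,
    eq_comm (a := x)]
  tauto

lemma SimpleGraph.cycleGraph_adj_add_one (hm : 1 < m) (x : Fin m) :
    (cycleGraph m).Adj x (x + 1) :=
  (cycleGraph_adj_iff hm).2 (.inl rfl)

lemma connected_induce_cycleArc (hm : 1 < m) (a : Fin m) (hk : 0 < k) :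
    ((cycleGraph m).induce (cycleArc a k : Set (Fin m))).Connected := by
  induction k with
  | zero => omega
  | succ k ih =>
    rcases k with _ | j
    · rw [show cycleArc a 1 = {a} by simp [cycleArc], coe_singleton]
      exact Connected.of_subsingleton
    · rw [cycleArc_add_one, coe_insert, Set.insert_eq, Set.union_comm]
      refine connected_induce_union (v := a + (j : Fin m)) (ih (by omega)).preconnected
        Preconnected.of_subsingleton (mem_cycleArc.2 ⟨j, by omega, rfl⟩) rfl ?_
      simpa [add_assoc] using cycleGraph_adj_add_one hm (a + (j : Fin m))

lemma natCast_pred_mem_cycleArc_iff {n : ℕ} (hn : 0 < n) (hnm : n ≤ m) :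
    ((n - 1 : ℕ) : Fin m) ∈ cycleArc b n ↔ b.val < n := by
  have hx : ((n - 1 : ℕ) : Fin m).val = n - 1 := Fin.val_cast_of_lt (by omega)
  rw [mem_cycleArc_iff_val_sub_lt hnm]
  rcases le_or_gt b ((n - 1 : ℕ) : Fin m) with h | h
  · rw [Fin.sub_val_of_le h]
    have := Fin.le_def.1 h
    omega
  · rw [Fin.coe_sub_iff_lt.2 h]
    have := Fin.lt_def.1 h
    omega

lemma exists_eq_cycleArc_of_connected {s : Finset (Fin m)} (hk : 0 < k) (hkm : k < m)
    (hs : #s = k) (hconn : ((cycleGraph m).induce (s : Set (Fin m))).Connected) :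
    ∃ a, s = cycleArc a k := by
  obtain ⟨a, has, ha⟩ : ∃ a ∈ s, a - 1 ∉ s := by
    by_contra! h
    obtain ⟨c, hc⟩ := card_pos.1 (hs ▸ hk)
    have hsub : ∀ i : ℕ, c - i ∈ s := by
      intro i
      induction i with
      | zero => simpa
      | succ i ih => simpa [sub_sub] using h _ ih
    have : s = univ := eq_univ_of_forall fun x => by simpa using hsub (c - x).val
    rw [this, card_univ, Fintype.card_fin] at hs
    omega
  have hinterval : ∀ x ∈ s, ∀ z : Fin m, (z - a).val ≤ (x - a).val → z ∈ s := by
    refine hconn.preconnected.subset_of_adj_closed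
      (T := {x | ∀ z : Fin m, (z - a).val ≤ (x - a).val → z ∈ s}) has ?_ ?_
    · intro z hz
      rw [sub_self, Fin.val_zero, Nat.le_zero, Fin.val_eq_zero_iff, sub_eq_zero] at hz
      rwa [hz]
    · intro x hx y hy hxy hxT z hz
      rcases (cycleGraph_adj_iff (by omega)).1 hxy with rfl | rfl
      · have hxa : x - a + 1 ≠ 0 := fun h =>
          ha (sub_eq_zero.1 (show x - (a - 1) = 0 by rw [← h]; ring) ▸ hx)
        rw [add_sub_right_comm, Fin.val_add_one_of_ne_zero hxa] at hz
        rcases hz.lt_or_eq with hlt | heq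
        · exact hxT z (by omega)
        · have : z - a = x - a + 1 := Fin.ext (by rw [heq, Fin.val_add_one_of_ne_zero hxa])
          rwa [show z = x + 1 by linear_combination this]
      · have hxa : x ≠ a := by rintro rfl; exact ha hy
        rw [sub_right_comm, Fin.val_sub_one_of_ne_zero (sub_ne_zero.2 hxa)] at hz
        exact hxT z (by omega)
  refine ⟨a, eq_of_subset_of_card_le (fun x hx => ?_) (by rw [card_cycleArc hkm.le, hs])⟩
  rw [mem_cycleArc_iff_val_sub_lt hkm.le]
  by_contra! hxk
  have hsub : cycleArc a (k + 1) ⊆ s := fun z hz =>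
    hinterval x hx z (by rw [mem_cycleArc_iff_val_sub_lt hkm] at hz; omega)
  have := card_le_card hsub
  rw [card_cycleArc hkm, hs] at this
  omega

end Arc

section Partition

lemma cycleArc_add_mem_parts {m n : ℕ} [NeZero m] (hn : 0 < n) (hnm : n < m)
    {P : Finpartition (univ : Finset (Fin m))}
    (hP : ∀ s ∈ P.parts, #s = n ∧ ((cycleGraph m).induce (s : Set (Fin m))).Connected)
    {c : Fin m} (hc : cycleArc c n ∈ P.parts) : cycleArc (c + (n : Fin m)) n ∈ P.parts := by
  obtain ⟨t, ht, hct⟩ := P.exists_mem (mem_univ (c + (n : Fin m)))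
  obtain ⟨b, rfl⟩ := exists_eq_cycleArc_of_connected hn hnm (hP t ht).1 (hP t ht).2
  have hcn : c + (n : Fin m) ∉ cycleArc c n := by
    rw [mem_cycleArc_iff_val_sub_lt hnm.le, add_sub_cancel_left, Fin.val_cast_of_lt hnm]
    exact lt_irrefl n
  obtain rfl : b = c + n := by
    by_contra hb
    have h1 := sub_one_mem_cycleArc hnm.le hct (Ne.symm hb)
    have h2 : c + (n : Fin m) - 1 ∈ cycleArc c n :=
      mem_cycleArc.2 ⟨n - 1, by omega, by push_cast [Nat.cast_sub hn]; ring⟩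
    exact hcn (P.eq_of_mem_parts ht hc h1 h2 ▸ hct)
  exact ht

lemma cycleArc_add_mul_mem_parts {m n : ℕ} [NeZero m] (hn : 0 < n) (hnm : n < m)
    {P : Finpartition (univ : Finset (Fin m))}
    (hP : ∀ s ∈ P.parts, #s = n ∧ ((cycleGraph m).induce (s : Set (Fin m))).Connected)
    {c : Fin m} (hc : cycleArc c n ∈ P.parts) (i : ℕ) :
    cycleArc (c + ((i * n : ℕ) : Fin m)) n ∈ P.parts := by
  induction i with
  | zero => simpa using hc
  | succ i ih => simpa [add_mul, add_assoc] using cycleArc_add_mem_parts hn hnm hP ih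

variable {q n : ℕ} [NeZero q] [NeZero n]

def cycleBlocks (c : Fin (q * n)) : Finset (Finset (Fin (q * n))) :=
  (range q).image fun i => cycleArc (c + ((i * n : ℕ) : Fin (q * n))) n

lemma mem_cycleBlocks {c : Fin (q * n)} {u : Finset (Fin (q * n))} :
    u ∈ cycleBlocks c ↔ ∃ i < q, cycleArc (c + ((i * n : ℕ) : Fin (q * n))) n = u := by
  simp [cycleBlocks]

lemma self_mem_cycleBlocks (c : Fin (q * n)) : cycleArc c n ∈ cycleBlocks c :=
  mem_cycleBlocks.2 ⟨0, Nat.pos_of_neZero q, by simp⟩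

lemma disjoint_cycleArc_blocks (c : Fin (q * n)) {i j : ℕ} (hi : i < q) (hj : j < q)
    (hij : i ≠ j) :
    Disjoint (cycleArc (c + ((i * n : ℕ) : Fin (q * n))) n)
      (cycleArc (c + ((j * n : ℕ) : Fin (q * n))) n) := by
  rcases hij.lt_or_gt with h | h
  · exact disjoint_cycleArc_add (by nlinarith) (by nlinarith) c
  · exact (disjoint_cycleArc_add (by nlinarith) (by nlinarith) c).symm

lemma card_cycleBlocks (c : Fin (q * n)) : #(cycleBlocks c) = q := by
  rw [cycleBlocks, card_image_of_injOn, card_range]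
  intro i hi j hj (hij : cycleArc _ n = cycleArc _ n)
  by_contra hne
  have hdisj := disjoint_cycleArc_blocks c (mem_range.1 hi) (mem_range.1 hj) hne
  rw [hij, disjoint_self, bot_eq_empty] at hdisj
  exact notMem_empty _ (hdisj ▸ self_mem_cycleArc (Nat.pos_of_neZero n))

lemma sup_cycleBlocks (c : Fin (q * n)) : (cycleBlocks c).sup id = univ := by
  refine eq_univ_of_forall fun x => mem_sup.2 ⟨_, mem_image_of_mem _ (mem_range.2
    (Nat.div_lt_of_lt_mul ((x - c).isLt.trans_eq (mul_comm q n)))), mem_cycleArc.2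
    ⟨(x - c).val % n, Nat.mod_lt _ (Nat.pos_of_neZero n), ?_⟩⟩
  rw [add_assoc, ← Nat.cast_add, Nat.div_add_mod', Fin.cast_val_eq_self, add_sub_cancel]

def cycleBlockPartition (c : Fin (q * n)) : Finpartition (univ : Finset (Fin (q * n))) where
  parts := cycleBlocks c
  supIndep := supIndep_iff_pairwiseDisjoint.2 fun u hu v hv huv => by
    obtain ⟨i, hi, rfl⟩ := mem_cycleBlocks.1 hu
    obtain ⟨j, hj, rfl⟩ := mem_cycleBlocks.1 hv
    exact disjoint_cycleArc_blocks c hi hj (by rintro rfl; exact huv rfl)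
  sup_parts := sup_cycleBlocks c
  bot_notMem h := by
    obtain ⟨i, -, hi⟩ := mem_cycleBlocks.1 h
    exact notMem_empty _ (hi ▸ self_mem_cycleArc (Nat.pos_of_neZero n))

/-- `IsBalanced3Partition n` unfolds to `IsBalancedPartition 3 n`. -/
def IsBalancedPartition (q n : ℕ) (P : Finpartition (univ : Finset (Fin (q * n)))) : Prop :=
  #P.parts = q ∧
    ∀ s ∈ P.parts, #s = n ∧ ((cycleGraph (q * n)).induce (s : Set (Fin (q * n)))).Connected

variable {P P' : Finpartition (univ : Finset (Fin (q * n)))}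

lemma IsBalancedPartition.exists_eq_cycleArc (hq : 1 < q) (hP : IsBalancedPartition q n P)
    {u : Finset (Fin (q * n))} (hu : u ∈ P.parts) : ∃ c, u = cycleArc c n :=
  exists_eq_cycleArc_of_connected (Nat.pos_of_neZero n)
    ((Nat.lt_mul_iff_one_lt_left (Nat.pos_of_neZero n)).2 hq) (hP.2 u hu).1 (hP.2 u hu).2

lemma IsBalancedPartition.parts_eq_cycleBlocks (hq : 1 < q) (hP : IsBalancedPartition q n P)
    {c : Fin (q * n)} (hc : cycleArc c n ∈ P.parts) : P.parts = cycleBlocks c := by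
  refine (eq_of_subset_of_card_le (fun u hu => ?_) (by rw [hP.1, card_cycleBlocks])).symm
  obtain ⟨i, -, rfl⟩ := mem_cycleBlocks.1 hu
  exact cycleArc_add_mul_mem_parts (Nat.pos_of_neZero n)
    ((Nat.lt_mul_iff_one_lt_left (Nat.pos_of_neZero n)).2 hq) hP.2 hc i

lemma IsBalancedPartition.eq_of_mem_parts (hq : 1 < q) (hP : IsBalancedPartition q n P)
    (hP' : IsBalancedPartition q n P') {u : Finset (Fin (q * n))} (hu : u ∈ P.parts)
    (hu' : u ∈ P'.parts) : P = P' := by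
  obtain ⟨c, rfl⟩ := hP.exists_eq_cycleArc hq hu
  exact Finpartition.ext ((hP.parts_eq_cycleBlocks hq hu).trans
    (hP'.parts_eq_cycleBlocks hq hu').symm)

lemma isBalancedPartition_cycleBlockPartition (hq : 1 < q) (c : Fin (q * n)) :
    IsBalancedPartition q n (cycleBlockPartition c) := by
  refine ⟨card_cycleBlocks c, fun s hs => ?_⟩
  obtain ⟨i, -, rfl⟩ := mem_cycleBlocks.1 hs
  have hn := Nat.pos_of_neZero n
  have hnm : n < q * n := (Nat.lt_mul_iff_one_lt_left hn).2 hq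
  exact ⟨card_cycleArc hnm.le, connected_induce_cycleArc (by omega) _ hn⟩

lemma ncard_setOf_isBalancedPartition (hq : 1 < q) :
    {P | IsBalancedPartition q n P}.ncard = n := by
  have hn := Nat.pos_of_neZero n
  have hnm : n ≤ q * n := Nat.le_mul_of_pos_left n (by omega)
  let f (j : Fin n) := cycleBlockPartition (j.castLE hnm)
  have hf (j : Fin n) : ((n - 1 : ℕ) : Fin (q * n)) ∈ cycleArc (j.castLE hnm) n :=
    (natCast_pred_mem_cycleArc_iff hn hnm).2 j.isLt
  -- a balanced partition is indexed by the start, in `[0, n)`, of its part through `n - 1`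
  suffices {P | IsBalancedPartition q n P} = Set.range f by
    rw [this, Set.ncard_range_of_injective, Nat.card_eq_fintype_card, Fintype.card_fin]
    intro i j hij
    have := (f j).eq_of_mem_parts (hij ▸ self_mem_cycleBlocks _) (self_mem_cycleBlocks _)
      (hf i) (hf j)
    exact Fin.castLE_injective hnm (cycleArc_injective hn (by nlinarith) this)
  ext P
  refine ⟨fun hP => ?_, ?_⟩
  · obtain ⟨t, ht, hxt⟩ := P.exists_mem (mem_univ ((n - 1 : ℕ) : Fin (q * n)))
    obtain ⟨b, rfl⟩ := hP.exists_eq_cycleArc hq ht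
    exact ⟨⟨b, (natCast_pred_mem_cycleArc_iff hn hnm).1 hxt⟩,
      (isBalancedPartition_cycleBlockPartition hq _).eq_of_mem_parts hq hP
        (self_mem_cycleBlocks _) ht⟩
  · rintro ⟨j, rfl⟩
    exact isBalancedPartition_cycleBlockPartition hq _

end Partition

lemma Finpartition.sdiff_union_mem_parts_of_card_eq_three {α : Type*} [DecidableEq α]
    {s : Finset α} (P : Finpartition s) (h3 : #P.parts = 3) {t u : Finset α}
    (ht : t ∈ P.parts) (hu : u ∈ P.parts) (htu : t ≠ u) : s \ (t ∪ u) ∈ P.parts := by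
  have hu' : u ∈ P.parts.erase t := mem_erase.2 ⟨htu.symm, hu⟩
  obtain ⟨v, hv⟩ := card_eq_one.1 (show #((P.parts.erase t).erase u) = 1 by
    rw [card_erase_of_mem hu', card_erase_of_mem ht, h3])
  have hvmem : v ∈ (P.parts.erase t).erase u := hv ▸ mem_singleton_self v
  obtain ⟨hvu, hvt, hvP⟩ : v ≠ u ∧ v ≠ t ∧ v ∈ P.parts := by simpa using hvmem
  have hparts : P.parts = {t, u, v} := by
    rw [← hv, insert_erase hu', insert_erase ht]
  have hs : t ∪ (u ∪ v) = s := by simpa [hparts] using P.sup_parts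
  have hvt' := disjoint_left.1 (P.disjoint hvP ht hvt)
  have hvu' := disjoint_left.1 (P.disjoint hvP hu hvu)
  convert hvP using 1
  ext x
  simp only [← hs, mem_sdiff, mem_union]
  grind

/-- The cycle `C_{3n}` has exactly `n` balanced 3-partitions (up to
labeling of the pieces); for any two balanced 3-partitions `P, P'`, no pair of pieces
of `P` has union equal to the union of a pair of pieces of `P'` unless `P = P'`; and
consequently a ReCom move (merging two pieces and resplitting their union into two
connected pieces of size `n`) cannot transform a balanced 3-partition into a different
one: any balanced 3-partition sharing a piece with `P` equals `P`. -/
theorem cycle_recom_frozen (n : ℕ) (hn : 1 ≤ n) :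
    Set.ncard {P : Finpartition (Finset.univ : Finset (Fin (3 * n))) |
        IsBalanced3Partition n P} = n ∧
    (∀ P P' : Finpartition (Finset.univ : Finset (Fin (3 * n))),
      IsBalanced3Partition n P → IsBalanced3Partition n P' →
      ∀ s ∈ P.parts, ∀ t ∈ P.parts, s ≠ t →
      ∀ s' ∈ P'.parts, ∀ t' ∈ P'.parts, s' ≠ t' →
      s ∪ t = s' ∪ t' → P = P') ∧
    (∀ P P' : Finpartition (Finset.univ : Finset (Fin (3 * n))),
      IsBalanced3Partition n P → IsBalanced3Partition n P' →
      ∀ u ∈ P.parts, u ∈ P'.parts → P = P') := by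
  have : NeZero n := ⟨by omega⟩
  refine ⟨ncard_setOf_isBalancedPartition (by norm_num), ?_, fun P P' hP hP' u hu hu' =>
    IsBalancedPartition.eq_of_mem_parts (by norm_num) hP hP' hu hu'⟩
  intro P P' hP hP' s hs t ht hst s' hs' t' ht' hst' hunion
  have hthird := P.sdiff_union_mem_parts_of_card_eq_three hP.1 hs ht hst
  have hthird' := P'.sdiff_union_mem_parts_of_card_eq_three hP'.1 hs' ht' hst'
  rw [hunion] at hthird
  exact IsBalancedPartition.eq_of_mem_parts (by norm_num) hP hP' hthird hthird'
end

section
/- For positive integers n and k, (kn)!/((n!)^k · k!) · n^{(n-2)k} · n^{2(k-1)} · k^{k-2} / (kn)^{kn-2} ≥ c_k · n^{-(k-1)/2} for a positive constant c_k depending only on k and all n ≥ 1. -/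
open Real Stirling

private lemma stirling_denom_pos (m : ℕ) (hm : 1 ≤ m) :
    0 < Real.sqrt (2 * m) * ((m : ℝ) / Real.exp 1) ^ m := by
  have h0 : (0 : ℝ) < m := by exact_mod_cast hm
  positivity

private lemma fact_lb {a : ℝ} (ha : ∀ n : ℕ, a ≤ Stirling.stirlingSeq (n + 1))
    (m : ℕ) (hm : 1 ≤ m) :
    a * (Real.sqrt (2 * m) * ((m : ℝ) / Real.exp 1) ^ m) ≤ (Nat.factorial m : ℝ) := by
  obtain ⟨j, rfl⟩ : ∃ j, m = j + 1 := ⟨m - 1, by omega⟩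
  have h := ha j
  have hd := stirling_denom_pos (j + 1) (by omega)
  have : a ≤ (Nat.factorial (j + 1) : ℝ) / (Real.sqrt (2 * (j + 1)) * (((j : ℝ) + 1) / Real.exp 1) ^ (j + 1)) := by
    simpa [Stirling.stirlingSeq] using h
  calc a * (Real.sqrt (2 * (j + 1 : ℕ)) * (((j + 1 : ℕ) : ℝ) / Real.exp 1) ^ (j + 1))
      ≤ (Nat.factorial (j + 1) : ℝ) / (Real.sqrt (2 * (j + 1)) * (((j : ℝ) + 1) / Real.exp 1) ^ (j + 1)) *
        (Real.sqrt (2 * (j + 1 : ℕ)) * (((j + 1 : ℕ) : ℝ) / Real.exp 1) ^ (j + 1)) := by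
        apply mul_le_mul_of_nonneg_right this (le_of_lt (stirling_denom_pos (j+1) (by omega)))
    _ = (Nat.factorial (j + 1) : ℝ) := by
        push_cast
        field_simp

private lemma fact_ub (m : ℕ) (hm : 1 ≤ m) :
    (Nat.factorial m : ℝ) ≤ Real.exp 1 * Real.sqrt m * ((m : ℝ) / Real.exp 1) ^ m := by
  obtain ⟨j, rfl⟩ : ∃ j, m = j + 1 := ⟨m - 1, by omega⟩
  have h : Stirling.stirlingSeq (j + 1) ≤ Stirling.stirlingSeq 1 :=
    Stirling.stirlingSeq'_antitone (Nat.zero_le j)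
  rw [Stirling.stirlingSeq_one] at h
  have hd := stirling_denom_pos (j + 1) (by omega)
  have h2 : (Nat.factorial (j + 1) : ℝ) ≤ (Real.exp 1 / Real.sqrt 2) *
      (Real.sqrt (2 * (j + 1 : ℕ)) * (((j + 1 : ℕ) : ℝ) / Real.exp 1) ^ (j + 1)) := by
    have := (div_le_iff₀ hd).mp (by simpa [Stirling.stirlingSeq] using h)
    simpa using this
  refine h2.trans (le_of_eq ?_)
  have hs : Real.sqrt (2 * (j + 1 : ℕ)) = Real.sqrt 2 * Real.sqrt ((j + 1 : ℕ)) := by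
    push_cast
    rw [Real.sqrt_mul (by norm_num)]
  rw [hs]
  have h2 : Real.sqrt 2 ≠ 0 := by positivity
  field_simp

private lemma mult_lb {a : ℝ} (ha0 : 0 < a) (ha : ∀ n : ℕ, a ≤ Stirling.stirlingSeq (n + 1))
    (k n : ℕ) (hk : 1 ≤ k) (hn : 1 ≤ n) :
    a * Real.sqrt (2 * k) / Real.exp 1 ^ k * (k : ℝ) ^ (k * n) *
      (Real.sqrt n / Real.sqrt n ^ k)
      ≤ (Nat.factorial (k * n) : ℝ) / (Nat.factorial n : ℝ) ^ k := by
  have hkn : 1 ≤ k * n := Nat.one_le_iff_ne_zero.mpr (by positivity)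
  have hN : (0 : ℝ) < n := by exact_mod_cast hn
  have hK : (0 : ℝ) < k := by exact_mod_cast hk
  have hS : (0 : ℝ) < Real.sqrt n := Real.sqrt_pos.mpr hN
  have hE : (0 : ℝ) < Real.exp 1 := Real.exp_pos 1
  have hA := fact_lb ha (k * n) hkn
  push_cast at hA
  have hB : ((Nat.factorial n : ℝ)) ^ k ≤ (Real.exp 1 * Real.sqrt n * ((n : ℝ) / Real.exp 1) ^ n) ^ k :=
    pow_le_pow_left₀ (by positivity) (fact_ub n hn) k
  have hApos : (0 : ℝ) < a * (Real.sqrt (2 * (k * n)) * ((k : ℝ) * n / Real.exp 1) ^ (k * n)) := by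
    have := stirling_denom_pos (k * n) hkn
    positivity
  have hBpos : (0 : ℝ) < ((Nat.factorial n : ℝ)) ^ k := by positivity
  have key : a * (Real.sqrt (2 * (k * n)) * ((k : ℝ) * n / Real.exp 1) ^ (k * n)) /
      (Real.exp 1 * Real.sqrt n * ((n : ℝ) / Real.exp 1) ^ n) ^ k
      ≤ (Nat.factorial (k * n) : ℝ) / (Nat.factorial n : ℝ) ^ k :=
    div_le_div₀ (by positivity) hA hBpos hB
  refine le_trans (le_of_eq ?_) key
  have hs : Real.sqrt (2 * ((k : ℝ) * n)) = Real.sqrt (2 * k) * Real.sqrt n := by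
    rw [show (2 : ℝ) * ((k : ℝ) * n) = (2 * k) * n by ring, Real.sqrt_mul (by positivity)]
  have hp : ((k : ℝ) * n / Real.exp 1) ^ (k * n)
      = (k : ℝ) ^ (k * n) * (((n : ℝ) / Real.exp 1)) ^ (k * n) := by
    rw [← mul_pow]
    ring_nf
  have hp2 : (((n : ℝ) / Real.exp 1) ^ n) ^ k = ((n : ℝ) / Real.exp 1) ^ (k * n) := by
    rw [← pow_mul, Nat.mul_comm]
  rw [hs, hp, mul_pow, mul_pow, hp2]
  have hne : ((n : ℝ) / Real.exp 1) ^ (k * n) ≠ 0 := by positivity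
  field_simp

/-- For every `k ≥ 1` there is a constant `c_k > 0` such that for all
`n ≥ 1`,
`((kn)!/((n!)^k · k!)) · n^((n-2)k) · n^(2(k-1)) · k^(k-2) / (kn)^(kn-2) ≥ c_k · n^(-(k-1)/2)`.
This is the quantitative core of the complete-graph splittability theorem. -/
theorem stirling_splittability_bound (k : ℕ) (hk : 1 ≤ k) :
    ∃ c : ℝ, 0 < c ∧ ∀ n : ℕ, 1 ≤ n →
      (Nat.factorial (k * n) : ℝ) / ((Nat.factorial n : ℝ) ^ k * (Nat.factorial k : ℝ)) *
          (n : ℝ) ^ ((n - 2) * k) * (n : ℝ) ^ (2 * (k - 1)) * (k : ℝ) ^ (k - 2) /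
          ((k * n : ℕ) : ℝ) ^ (k * n - 2) ≥
        c * (n : ℝ) ^ (-((k : ℝ) - 1) / 2) := by
  obtain ⟨a, ha0, ha⟩ := Stirling.stirlingSeq'_bounded_by_pos_constant
  have hK : (0 : ℝ) < k := by exact_mod_cast hk
  have hkfac : (0 : ℝ) < (Nat.factorial k : ℝ) := by exact_mod_cast Nat.factorial_pos k
  set c' : ℝ := a * Real.sqrt (2 * k) / Real.exp 1 ^ k * (k : ℝ) ^ 2 * (k : ℝ) ^ (k - 2) /
      (Nat.factorial k : ℝ) with hc'
  have hc'pos : 0 < c' := by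
    have h2k : (0 : ℝ) < Real.sqrt (2 * k) := Real.sqrt_pos.mpr (by positivity)
    positivity
  refine ⟨min 1 c', lt_min one_pos hc'pos, fun n hn => ?_⟩
  have hN : (0 : ℝ) < n := by exact_mod_cast hn
  have hS : (0 : ℝ) < Real.sqrt n := Real.sqrt_pos.mpr hN
  have hrpow : (n : ℝ) ^ (-((k : ℝ) - 1) / 2) = Real.sqrt n / Real.sqrt n ^ k := by
    rw [Real.sqrt_eq_rpow, ← Real.rpow_natCast ((n : ℝ) ^ ((1 : ℝ)/2)) k,
      ← Real.rpow_mul hN.le, ← Real.rpow_sub hN]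
    norm_num
    ring_nf
  rcases eq_or_lt_of_le hn with h1 | h2
  · -- n = 1
    have hn1 : n = 1 := h1.symm
    subst hn1
    have hKne : (k : ℝ) ^ (k - 2) ≠ 0 := by positivity
    have : (Nat.factorial (k * 1) : ℝ) / ((Nat.factorial 1 : ℝ) ^ k * (Nat.factorial k : ℝ)) *
          (1 : ℝ) ^ ((1 - 2) * k) * (1 : ℝ) ^ (2 * (k - 1)) * (k : ℝ) ^ (k - 2) /
          ((k * 1 : ℕ) : ℝ) ^ (k * 1 - 2) = 1 := by
      simp [Nat.mul_one]
      field_simp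
    rw [show ((1 : ℕ) : ℝ) = (1 : ℝ) by norm_num] at *
    rw [this, Real.one_rpow]
    calc min 1 c' * 1 ≤ 1 * 1 := by
            apply mul_le_mul_of_nonneg_right (min_le_left _ _) zero_le_one
      _ = 1 := by norm_num
  · -- n ≥ 2
    have hn2 : 2 ≤ n := h2
    have hkn2 : 2 ≤ k * n := le_trans hn2 (Nat.le_mul_of_pos_left n hk)
    have hM := mult_lb ha0 ha k n hk hn
    set c0 : ℝ := a * Real.sqrt (2 * k) / Real.exp 1 ^ k with hc0
    set M : ℝ := (Nat.factorial (k * n) : ℝ) / (Nat.factorial n : ℝ) ^ k with hMdef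
    have hMpos : 0 < M := by
      have := Nat.factorial_pos (k * n)
      have := Nat.factorial_pos n
      apply div_pos <;> [exact_mod_cast Nat.cast_pos.mpr (Nat.factorial_pos (k*n)); positivity]
    have e1 : (n - 2) * k + 2 * (k - 1) = k * n - 2 := by
      have hmul : 2 * k ≤ n * k := Nat.mul_le_mul_right k hn2
      have hsub : (n - 2) * k = n * k - 2 * k := Nat.sub_mul n 2 k
      have hcomm : k * n = n * k := Nat.mul_comm k n
      omega
    have eL : (Nat.factorial (k * n) : ℝ) / ((Nat.factorial n : ℝ) ^ k * (Nat.factorial k : ℝ)) *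
          (n : ℝ) ^ ((n - 2) * k) * (n : ℝ) ^ (2 * (k - 1)) * (k : ℝ) ^ (k - 2) /
          ((k * n : ℕ) : ℝ) ^ (k * n - 2)
        = M * ((k : ℝ) ^ (k - 2) / ((Nat.factorial k : ℝ) * (k : ℝ) ^ (k * n - 2))) := by
      have hcast : ((k * n : ℕ) : ℝ) = (k : ℝ) * n := by push_cast; ring
      rw [hcast, mul_pow]
      rw [mul_assoc ((Nat.factorial (k * n) : ℝ) / _), ← pow_add, e1]
      have hNpow : ((n : ℝ)) ^ (k * n - 2) ≠ 0 := by positivity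
      have hKpow : ((k : ℝ)) ^ (k * n - 2) ≠ 0 := by positivity
      have hfn : ((Nat.factorial n : ℝ)) ^ k ≠ 0 := by positivity
      field_simp [hMdef]
      ring
      rw [hMdef]
      field_simp
    have eK : (k : ℝ) ^ (k * n) = (k : ℝ) ^ (k * n - 2) * (k : ℝ) ^ 2 := by
      rw [← pow_add]
      congr 1
      omega
    have hfacpos : (0 : ℝ) < (k : ℝ) ^ (k - 2) / ((Nat.factorial k : ℝ) * (k : ℝ) ^ (k * n - 2)) := by
      positivity
    rw [eL, hrpow, ge_iff_le]
    calc min 1 c' * (Real.sqrt n / Real.sqrt n ^ k)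
        ≤ c' * (Real.sqrt n / Real.sqrt n ^ k) := by
          apply mul_le_mul_of_nonneg_right (min_le_right _ _) (by positivity)
      _ = (c0 * (k : ℝ) ^ (k * n) * (Real.sqrt n / Real.sqrt n ^ k)) *
          ((k : ℝ) ^ (k - 2) / ((Nat.factorial k : ℝ) * (k : ℝ) ^ (k * n - 2))) := by
          rw [hc', eK, hc0]
          have hKpow : ((k : ℝ)) ^ (k * n - 2) ≠ 0 := by positivity
          field_simp
      _ ≤ M * ((k : ℝ) ^ (k - 2) / ((Nat.factorial k : ℝ) * (k : ℝ) ^ (k * n - 2))) :=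
          mul_le_mul_of_nonneg_right hM hfacpos.le
end
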